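/- arXiv:2310.05252 — 5 statements merged into one kernel-verified Lean document; each statement's English description precedes it below -/
import Mathlib

section
/- For every preference profile, every stable matching μ, and every man m, the match of m under the men-proposing deferred acceptance rule is weakly preferred by m to μ(m) (men-optimality of MPDA). -/
/-- A one-to-one matching between men `M` and women `W`; `none` means unmatched. -/
structure Matching (M W : Type*) where
  menMatch : M → Option W
  womenMatch : W → Option M
  consistent : ∀ m w, menMatch m = some w ↔ womenMatch w = some m

/-- A preference profile: each man has a strict linear order over `W ∪ {∅}`
(encoded as `Option W`, with `none` the outside option), and each woman over `M ∪ {∅}`. -/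
structure Profile (M W : Type*) where
  menPref : M → LinearOrder (Option W)
  womenPref : W → LinearOrder (Option M)

variable {M W : Type*}

def IndividuallyRational (μ : Matching M W) (P : Profile M W) : Prop :=
  (∀ m, (P.menPref m).le none (μ.menMatch m)) ∧
  (∀ w, (P.womenPref w).le none (μ.womenMatch w))

def Blocks (m : M) (w : W) (μ : Matching M W) (P : Profile M W) : Prop :=
  (P.menPref m).lt (μ.menMatch m) (some w) ∧
  (P.womenPref w).lt (μ.womenMatch w) (some m)

def Stable (μ : Matching M W) (P : Profile M W) : Prop :=
  IndividuallyRational μ P ∧ ∀ m w, ¬ Blocks m w μ P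

/-- The men-optimal stable matching: stable, and every man weakly prefers it to
any stable matching.  This characterizes the outcome of the men-proposing
deferred acceptance (MPDA) algorithm. -/
def MenOptimalStable (μ : Matching M W) (P : Profile M W) : Prop :=
  Stable μ P ∧
    ∀ ν : Matching M W, Stable ν P → ∀ m, (P.menPref m).le (ν.menMatch m) (μ.menMatch m)

/-- The women-optimal stable matching, i.e. the outcome of women-proposing DA. -/
def WomenOptimalStable (μ : Matching M W) (P : Profile M W) : Prop :=
  Stable μ P ∧
    ∀ ν : Matching M W, Stable ν P → ∀ w, (P.womenPref w).le (ν.womenMatch w) (μ.womenMatch w)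

def Matching.empty (M W : Type*) : Matching M W :=
  ⟨fun _ => none, fun _ => none, by intro m w; simp⟩

/-- The men-proposing deferred acceptance rule `D^M`. -/
noncomputable def mpda (P : Profile M W) : Matching M W :=
  letI := Classical.dec (∃ μ : Matching M W, MenOptimalStable μ P)
  if h : ∃ μ : Matching M W, MenOptimalStable μ P then h.choose else Matching.empty M W

/-- The women-proposing deferred acceptance rule `D^W`. -/
noncomputable def wpda (P : Profile M W) : Matching M W :=
  letI := Classical.dec (∃ μ : Matching M W, WomenOptimalStable μ P)
  if h : ∃ μ : Matching M W, WomenOptimalStable μ P then h.choose else Matching.empty M W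

/-- A domain of preference profiles: a set of admissible preferences for each agent. -/
structure Domain (M W : Type*) where
  men : M → Set (LinearOrder (Option W))
  women : W → Set (LinearOrder (Option M))

/-- Membership of a profile in (the product domain generated by) a domain. -/
def Domain.mem (D : Domain M W) (P : Profile M W) : Prop :=
  (∀ m, P.menPref m ∈ D.men m) ∧ (∀ w, P.womenPref w ∈ D.women w)

def Profile.updateMan [DecidableEq M] (P : Profile M W) (m : M)
    (p : LinearOrder (Option W)) : Profile M W :=
  ⟨Function.update P.menPref m p, P.womenPref⟩

def Profile.updateWoman [DecidableEq W] (P : Profile M W) (w : W)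
    (p : LinearOrder (Option M)) : Profile M W :=
  ⟨P.menPref, Function.update P.womenPref w p⟩

/-- A matching rule is stable on a domain if it selects a stable matching at
every profile of the domain. -/
def StableOn (D : Domain M W) (φ : Profile M W → Matching M W) : Prop :=
  ∀ P, D.mem P → Stable (φ P) P

/-- Strategy-proofness on a domain: no single agent can strictly gain by
misreporting an admissible preference. -/
def StrategyProofOn [DecidableEq M] [DecidableEq W] (D : Domain M W)
    (φ : Profile M W → Matching M W) : Prop :=
  ∀ P, D.mem P →
    (∀ m p, p ∈ D.men m →
      (P.menPref m).le ((φ (P.updateMan m p)).menMatch m) ((φ P).menMatch m)) ∧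
    (∀ w p, p ∈ D.women w →
      (P.womenPref w).le ((φ (P.updateWoman w p)).womenMatch w) ((φ P).womenMatch w))

/-- A coalition `(Sm, Sw)` manipulates `φ` at `P` via the admissible profile `Q`
(which agrees with `P` outside the coalition): every coalition member is
strictly better off at `φ Q` than at `φ P` according to true preferences. -/
def Manipulation (D : Domain M W) (φ : Profile M W → Matching M W)
    (P Q : Profile M W) (Sm : Set M) (Sw : Set W) : Prop :=
  D.mem P ∧ D.mem Q ∧
  (∀ m ∉ Sm, Q.menPref m = P.menPref m) ∧
  (∀ w ∉ Sw, Q.womenPref w = P.womenPref w) ∧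
  (∀ m ∈ Sm, (P.menPref m).lt ((φ P).menMatch m) ((φ Q).menMatch m)) ∧
  (∀ w ∈ Sw, (P.womenPref w).lt ((φ P).womenMatch w) ((φ Q).womenMatch w))

/-- Group strategy-proofness on a domain: no nonempty coalition can manipulate. -/
def GroupStrategyProofOn (D : Domain M W) (φ : Profile M W → Matching M W) : Prop :=
  ¬ ∃ (P Q : Profile M W) (Sm : Set M) (Sw : Set W),
      (Sm.Nonempty ∨ Sw.Nonempty) ∧ Manipulation D φ P Q Sm Sw

/-- Top dominance for women. -/
def TopDominanceWomen (D : Domain M W) : Prop :=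
  ∀ w : W, ∀ x : M, ∀ y z : Option M,
    (∃ P ∈ D.women w, P.lt y (some x) ∧ P.lt z y ∧ P.le none y) →
      ¬ ∃ P' ∈ D.women w, P'.lt z (some x) ∧ P'.lt y z ∧ P'.le none z

/-- Top dominance for men. -/
def TopDominanceMen (D : Domain M W) : Prop :=
  ∀ m : M, ∀ x : W, ∀ y z : Option W,
    (∃ P ∈ D.men m, P.lt y (some x) ∧ P.lt z y ∧ P.le none y) →
      ¬ ∃ P' ∈ D.men m, P'.lt z (some x) ∧ P'.lt y z ∧ P'.le none z

/-- Unrestricted top pairs for men. -/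
def UnrestrictedTopPairsMen (D : Domain M W) : Prop :=
  ∀ m : M,
    (∀ w w' : W, w ≠ w' → ∃ P ∈ D.men m, P.lt (some w') (some w) ∧
        ∀ z : Option W, z ≠ some w → z ≠ some w' → P.lt z (some w')) ∧
    (∀ w : W, ∃ P ∈ D.men m, P.lt none (some w) ∧
        ∀ z : Option W, z ≠ some w → z ≠ none → P.lt z none) ∧
    (∃ P ∈ D.men m, ∀ z : Option W, z ≠ none → P.lt z none)

/-- Unrestricted top pairs for women. -/
def UnrestrictedTopPairsWomen (D : Domain M W) : Prop :=
  ∀ w : W,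
    (∀ m m' : M, m ≠ m' → ∃ P ∈ D.women w, P.lt (some m') (some m) ∧
        ∀ z : Option M, z ≠ some m → z ≠ some m' → P.lt z (some m')) ∧
    (∀ m : M, ∃ P ∈ D.women w, P.lt none (some m) ∧
        ∀ z : Option M, z ≠ some m → z ≠ none → P.lt z none) ∧
    (∃ P ∈ D.women w, ∀ z : Option M, z ≠ none → P.lt z none)

/-- Single-peakedness of a preference over `Option α` with respect to a prior
order `ord` on `α`:  moving away from the peak (the most preferred element of
`α`) on either side makes the preference decline. -/
def SinglePeaked {α : Type*} (ord : LinearOrder α) (P : LinearOrder (Option α)) : Prop :=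
  ∀ peak : α, (∀ a : α, P.le (some a) (some peak)) →
    ∀ a b : α, ((ord.le peak a ∧ ord.lt a b) ∨ (ord.lt b a ∧ ord.le a peak)) →
      P.lt (some b) (some a)

/-- The maximal single-peaked domain with respect to orders on men and women. -/
def maximalSinglePeakedDomain (ordM : LinearOrder M) (ordW : LinearOrder W) : Domain M W :=
  ⟨fun _ => {P | SinglePeaked ordW P}, fun _ => {P | SinglePeaked ordM P}⟩

/-- A domain is single-peaked if all admissible preferences are single-peaked. -/
def Domain.SinglePeakedDomain (D : Domain M W) (ordM : LinearOrder M)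
    (ordW : LinearOrder W) : Prop :=
  (∀ m, ∀ P ∈ D.men m, SinglePeaked ordW P) ∧ (∀ w, ∀ P ∈ D.women w, SinglePeaked ordM P)

/-- Anonymity: all men share the same admissible set, and all women do too. -/
def Domain.Anonymous (D : Domain M W) : Prop :=
  (∀ m m' : M, D.men m = D.men m') ∧ (∀ w w' : W, D.women w = D.women w')

/-- Cyclical inclusion for men. -/
def CyclicalInclusionMen (D : Domain M W) : Prop :=
  ∀ m : M,
    (∃ P ∈ D.men m, ∀ z : Option W, z ≠ none → P.lt z none) ∧
    (∀ w w' : W,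
      (∃ P ∈ D.men m, P.lt (some w') (some w) ∧ P.lt none (some w')) →
      (∃ P ∈ D.men m, P.lt (some w) (some w') ∧ P.lt none (some w)))

/-- Cyclical inclusion for women. -/
def CyclicalInclusionWomen (D : Domain M W) : Prop :=
  ∀ w : W,
    (∃ P ∈ D.women w, ∀ z : Option M, z ≠ none → P.lt z none) ∧
    (∀ m m' : M,
      (∃ P ∈ D.women w, P.lt (some m') (some m) ∧ P.lt none (some m')) →
      (∃ P ∈ D.women w, P.lt (some m) (some m') ∧ P.lt none (some m)))

/-- The unrestricted domain: every strict linear order is admissible. -/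
def fullDomain (M W : Type*) : Domain M W :=
  ⟨fun _ => Set.univ, fun _ => Set.univ⟩

/-!
In a finite market the stable matchings are finitely many and directed for the men's preferences,
so there is a men-optimal one as soon as there is any, and `mpda` picks it. For directedness, given
stable `μ` and `ν`, let every man take the better of his two partners and every woman the worse of
hers. This is a matching by the decomposition lemma (a woman strictly preferring `μ` to `ν` is the
`ν`-partner of a man strictly preferring `ν` to `μ`), which is a counting argument: `ν` maps the men
preferring `ν` injectively to women preferring `μ`, and `μ` maps these back injectively. A pair
blocking the new matching would block `μ` or `ν`.
-/

open Set

theorem Set.surjOn_some_image_of_injOn {α β : Type*} [Finite α] [Finite β] {f : α → Option β}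
    {g : β → Option α} {s : Set α} {t : Set β} (hf : MapsTo f s (some '' t)) (hf' : InjOn f s)
    (hg : MapsTo g t (some '' s)) (hg' : InjOn g t) : SurjOn f s (some '' t) := by
  have hcard : (some '' t).ncard ≤ (f '' s).ncard :=
    calc (some '' t).ncard = (g '' t).ncard := by
          rw [ncard_image_of_injective _ (Option.some_injective _), hg'.ncard_image]
      _ ≤ (some '' s).ncard := ncard_le_ncard hg.image_subset
      _ = (f '' s).ncard := by
          rw [ncard_image_of_injective _ (Option.some_injective _), hf'.ncard_image]
  exact (eq_of_subset_of_ncard_le hf.image_subset hcard).superset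

namespace Matching

theorem menMatch_injective : Function.Injective (menMatch : Matching M W → M → Option W) := by
  rintro ⟨f, g, hfg⟩ ⟨f', g', hfg'⟩ (rfl : f = f')
  obtain rfl : g = g' := funext fun w => Option.ext fun m => (hfg m w).symm.trans (hfg' m w)
  rfl

instance [Finite M] [Finite W] : Finite (Matching M W) :=
  Finite.of_injective _ menMatch_injective

variable (μ : Matching M W)

theorem eq_of_menMatch_eq_some {a b : M} {w : W} (ha : μ.menMatch a = some w)
    (hb : μ.menMatch b = some w) : a = b :=
  Option.some_injective _ (((μ.consistent a w).1 ha).symm.trans ((μ.consistent b w).1 hb))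

theorem injOn_menMatch {s : Set M} (hs : MapsTo μ.menMatch s (range some)) :
    InjOn μ.menMatch s := fun _ ha _ _ hab =>
  let ⟨_, hw⟩ := hs ha
  μ.eq_of_menMatch_eq_some hw.symm (hab ▸ hw.symm)

def symm : Matching W M := ⟨μ.womenMatch, μ.menMatch, fun w m => (μ.consistent m w).symm⟩

end Matching

def Profile.symm (P : Profile M W) : Profile W M := ⟨P.womenPref, P.menPref⟩

section Stable

variable {P : Profile M W} {μ ν : Matching M W} {m : M} {w : W}

theorem Stable.symm (h : Stable μ P) : Stable μ.symm P.symm :=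
  ⟨⟨h.1.2, h.1.1⟩, fun w m hb => h.2 m w ⟨hb.2, hb.1⟩⟩

theorem Stable.womenPref_le_of_menPref_lt (hμ : Stable μ P)
    (h : (P.menPref m).lt (μ.menMatch m) (some w)) :
    (P.womenPref w).le (some m) (μ.womenMatch w) := by
  let _ := P.womenPref w
  exact not_lt.1 fun h' => hμ.2 m w ⟨h, h'⟩

theorem Stable.exists_womenPref_lt_of_menPref_lt (hμ : Stable μ P)
    (h : (P.menPref m).lt (μ.menMatch m) (ν.menMatch m)) :
    ∃ w, ν.menMatch m = some w ∧ (P.womenPref w).lt (ν.womenMatch w) (μ.womenMatch w) := by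
  let _ := P.menPref m
  obtain ⟨w, hw⟩ : ∃ w, ν.menMatch m = some w :=
    Option.ne_none_iff_exists'.1 fun hnone => (hnone ▸ h).not_ge (hμ.1.1 m)
  let _ := P.womenPref w
  refine ⟨w, hw, ?_⟩
  rw [(ν.consistent m w).1 hw]
  refine lt_of_le_of_ne (hμ.womenPref_le_of_menPref_lt (hw ▸ h)) fun hμw => ?_
  rw [(μ.consistent m w).2 hμw.symm, hw] at h
  exact lt_irrefl _ h

theorem Stable.exists_menPref_lt_of_womenPref_lt [Finite M] [Finite W] (hμ : Stable μ P)
    (hν : Stable ν P) (hw : (P.womenPref w).lt (ν.womenMatch w) (μ.womenMatch w)) :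
    ∃ m, ν.menMatch m = some w ∧ (P.menPref m).lt (μ.menMatch m) (ν.menMatch m) := by
  set S := {m | (P.menPref m).lt (μ.menMatch m) (ν.menMatch m)}
  set T := {w | (P.womenPref w).lt (ν.womenMatch w) (μ.womenMatch w)}
  have hST : MapsTo ν.menMatch S (some '' T) := fun m hm =>
    let ⟨w, hmw, hw⟩ := hμ.exists_womenPref_lt_of_menPref_lt hm
    ⟨w, hw, hmw.symm⟩
  have hTS : MapsTo μ.womenMatch T (some '' S) := fun w hw =>
    let ⟨m, hwm, hm⟩ := hν.symm.exists_womenPref_lt_of_menPref_lt (ν := μ.symm) hw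
    ⟨m, hm, hwm.symm⟩
  have hinjS : InjOn ν.menMatch S :=
    ν.injOn_menMatch (hST.mono_right (image_subset_range _ _))
  have hinjT : InjOn μ.womenMatch T :=
    μ.symm.injOn_menMatch (hTS.mono_right (image_subset_range _ _))
  obtain ⟨m, hm, hmw⟩ := surjOn_some_image_of_injOn hST hinjS hTS hinjT (mem_image_of_mem _ hw)
  exact ⟨m, hmw, hm⟩

theorem Stable.min_womenMatch_eq_some (hν : Stable ν P) (hμm : μ.menMatch m = some w)
    (hνm : (P.menPref m).le (ν.menMatch m) (some w)) :
    (P.womenPref w).min (μ.womenMatch w) (ν.womenMatch w) = some m := by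
  let _ := P.menPref m
  let _ := P.womenPref w
  rw [(μ.consistent m w).1 hμm, min_eq_left]
  rcases eq_or_lt_of_le hνm with hνm | hνm
  · rw [(ν.consistent m w).1 hνm]
  · exact hν.womenPref_le_of_menPref_lt hνm

theorem Stable.max_menMatch_eq_some [Finite M] [Finite W] (hμ : Stable μ P) (hν : Stable ν P)
    (hμw : μ.womenMatch w = some m) (hνw : (P.womenPref w).le (some m) (ν.womenMatch w)) :
    (P.menPref m).max (μ.menMatch m) (ν.menMatch m) = some w := by
  let _ := P.menPref m
  let _ := P.womenPref w
  have hμm := (μ.consistent m w).2 hμw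
  rw [hμm, max_eq_left]
  refine le_of_not_gt fun hlt => ?_
  rcases eq_or_lt_of_le hνw with hνw | hνw
  · rw [(ν.consistent m w).2 hνw.symm] at hlt
    exact lt_irrefl _ hlt
  · obtain ⟨m', hm'w, hm'⟩ := hν.exists_menPref_lt_of_womenPref_lt hμ (hμw ▸ hνw)
    obtain rfl := μ.eq_of_menMatch_eq_some hm'w hμm
    exact hm'.not_gt (hμm ▸ hlt)

theorem Stable.max_menMatch_eq_some_iff [Finite M] [Finite W] (hμ : Stable μ P)
    (hν : Stable ν P) :
    (P.menPref m).max (μ.menMatch m) (ν.menMatch m) = some w ↔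
      (P.womenPref w).min (μ.womenMatch w) (ν.womenMatch w) = some m := by
  let _ := P.menPref m
  let _ := P.womenPref w
  constructor
  · intro h
    rcases max_choice (μ.menMatch m) (ν.menMatch m) with hmax | hmax
    · exact hν.min_womenMatch_eq_some (hmax ▸ h) (h ▸ le_max_right _ _)
    · rw [min_comm]
      exact hμ.min_womenMatch_eq_some (hmax ▸ h) (h ▸ le_max_left _ _)
  · intro h
    rcases min_choice (μ.womenMatch w) (ν.womenMatch w) with hmin | hmin
    · exact hμ.max_menMatch_eq_some hν (hmin ▸ h) (h ▸ min_le_right _ _)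
    · rw [max_comm]
      exact hν.max_menMatch_eq_some hμ (hmin ▸ h) (h ▸ min_le_left _ _)

theorem Stable.exists_stable_menMatch_eq_max [Finite M] [Finite W] (hμ : Stable μ P)
    (hν : Stable ν P) : ∃ ρ : Matching M W, Stable ρ P ∧
      ∀ m, ρ.menMatch m = (P.menPref m).max (μ.menMatch m) (ν.menMatch m) := by
  refine ⟨⟨fun m => (P.menPref m).max (μ.menMatch m) (ν.menMatch m),
    fun w => (P.womenPref w).min (μ.womenMatch w) (ν.womenMatch w),
    fun m w => hμ.max_menMatch_eq_some_iff hν⟩, ⟨⟨fun m => ?_, fun w => ?_⟩, fun m w => ?_⟩,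
    fun m => rfl⟩
  · let _ := P.menPref m
    exact le_max_of_le_left (hμ.1.1 m)
  · let _ := P.womenPref w
    exact le_min (hμ.1.2 w) (hν.1.2 w)
  · let _ := P.menPref m
    let _ := P.womenPref w
    rintro ⟨hm, hw⟩
    obtain ⟨hμm, hνm⟩ := max_lt_iff.1 hm
    rcases min_lt_iff.1 hw with hμw | hνw
    · exact hμ.2 m w ⟨hμm, hμw⟩
    · exact hν.2 m w ⟨hνm, hνw⟩

end Stable

def Profile.MenLE (P : Profile M W) (ν μ : Matching M W) : Prop :=
  ∀ m, (P.menPref m).le (ν.menMatch m) (μ.menMatch m)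

instance (P : Profile M W) : IsTrans (Matching M W) P.MenLE :=
  ⟨fun _ _ _ h₁ h₂ m => let _ := P.menPref m; (h₁ m).trans (h₂ m)⟩

theorem Profile.directed_menLE [Finite M] [Finite W] (P : Profile M W) :
    Directed P.MenLE (Subtype.val : {μ : Matching M W // Stable μ P} → Matching M W) := by
  rintro ⟨μ, hμ⟩ ⟨ν, hν⟩
  obtain ⟨ρ, hρ, hρm⟩ := hμ.exists_stable_menMatch_eq_max hν
  refine ⟨⟨ρ, hρ⟩, fun m => ?_, fun m => ?_⟩ <;> let _ := P.menPref m <;> rw [hρm]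
  exacts [le_max_left _ _, le_max_right _ _]

theorem Stable.exists_menOptimalStable [Finite M] [Finite W] {P : Profile M W}
    {μ₀ : Matching M W} (h₀ : Stable μ₀ P) : ∃ μ : Matching M W, MenOptimalStable μ P := by
  have : Nonempty {μ : Matching M W // Stable μ P} := ⟨⟨μ₀, h₀⟩⟩
  obtain ⟨⟨μ, hμ⟩, hμ_ge⟩ := P.directed_menLE.finite_le id
  exact ⟨μ, hμ, fun ν hν => hμ_ge ⟨ν, hν⟩⟩

theorem mpda_menOptimalStable {P : Profile M W} (h : ∃ μ : Matching M W, MenOptimalStable μ P) :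
    MenOptimalStable (mpda P) P := by
  rw [mpda, dif_pos h]
  exact h.choose_spec

/-- every man weakly prefers his MPDA match to his match under any
stable matching. -/
theorem mpda_men_optimal [Fintype M] [Fintype W] (P : Profile M W)
    (mu : Matching M W) (hmu : Stable mu P) (m : M) :
    (P.menPref m).le (mu.menMatch m) ((mpda P).menMatch m) :=
  (mpda_menOptimalStable hmu.exists_menOptimalStable).2 mu hmu m
end

section
/- The set of unmatched agents is the same across all stable matchings at a given preference profile: if μ and ν are both stable at a profile P, then for every agent a, μ(a) = ∅ if and only if ν(a) = ∅. -/
variable {M W : Type*}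

/-! Suppose a man `m₀` is matched under `μ` but not under `ν`, and let `A` be the set of men who
strictly prefer their `μ`-partner to their `ν`-partner, so `m₀ ∈ A`. If `m ∈ A`, his `μ`-partner
`w` strictly prefers her `ν`-partner to `m`, since otherwise `(m, w)` blocks `ν`; and that
`ν`-partner is again in `A`, since otherwise he blocks `μ` together with `w`. Hence
`m ↦ ν(μ(m))` is an injection of `A` into itself that misses `m₀`, impossible for finite `A`.
The statement for women follows by exchanging the two sides of the market. -/

namespace Matching

theorem eq_of_menMatch_eq_some_s2 (μ : Matching M W) {m m' : M} {w : W}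
    (h : μ.menMatch m = some w) (h' : μ.menMatch m' = some w) : m = m' :=
  Option.some_injective _ <|
    ((μ.consistent m w).mp h).symm.trans ((μ.consistent m' w).mp h')

def dual (μ : Matching M W) : Matching W M :=
  ⟨μ.womenMatch, μ.menMatch, fun w m => (μ.consistent m w).symm⟩

end Matching

def Profile.dual (P : Profile M W) : Profile W M :=
  ⟨P.womenPref, P.menPref⟩

theorem Blocks.dual {P : Profile M W} {μ : Matching M W} {m : M} {w : W}
    (h : Blocks w m μ.dual P.dual) : Blocks m w μ P :=
  ⟨h.2, h.1⟩

theorem Stable.dual {P : Profile M W} {μ : Matching M W} (h : Stable μ P) :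
    Stable μ.dual P.dual :=
  ⟨⟨h.1.2, h.1.1⟩, fun w m hb => h.2 m w hb.dual⟩

theorem LinearOrder.ne_none_of_le_of_lt {α : Type*} (L : LinearOrder (Option α))
    {a b : Option α} (ha : L.le none a) (hab : L.lt a b) : b ≠ none := by
  let _ := L
  rintro rfl
  exact (lt_of_le_of_lt ha hab).false

section Opposition

variable {P : Profile M W} {μ ν : Matching M W}

theorem lt_womenMatch_of_lt_menMatch (hν : ∀ m w, ¬ Blocks m w ν P) {m : M} {w : W}
    (hm : (P.menPref m).lt (ν.menMatch m) (μ.menMatch m)) (hw : μ.menMatch m = some w) :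
    (P.womenPref w).lt (μ.womenMatch w) (ν.womenMatch w) := by
  let _ := P.womenPref w
  rw [(μ.consistent m w).mp hw]
  rw [hw] at hm
  have hle : some m ≤ ν.womenMatch w := not_lt.mp fun hlt => hν m w ⟨hm, hlt⟩
  refine hle.lt_of_ne fun heq => ?_
  rw [(ν.consistent m w).mpr heq.symm] at hm
  let _ := P.menPref m
  exact lt_irrefl _ hm

theorem lt_menMatch_of_lt_womenMatch (hμ : ∀ m w, ¬ Blocks m w μ P) {m : M} {w : W}
    (hw : (P.womenPref w).lt (μ.womenMatch w) (ν.womenMatch w))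
    (hm : ν.womenMatch w = some m) :
    (P.menPref m).lt (ν.menMatch m) (μ.menMatch m) :=
  lt_womenMatch_of_lt_menMatch (P := P.dual) (μ := ν.dual) (ν := μ.dual)
    (fun w m hb => hμ m w hb.dual) hw hm

end Opposition

theorem Stable.menMatch_eq_none [Finite M] {P : Profile M W} {μ ν : Matching M W}
    (hμ : Stable μ P) (hν : Stable ν P) {m₀ : M} (h₀ : ν.menMatch m₀ = none) :
    μ.menMatch m₀ = none := by
  by_contra hm₀
  let A := {m : M // (P.menPref m).lt (ν.menMatch m) (μ.menMatch m)}
  have hA₀ : (P.menPref m₀).lt (ν.menMatch m₀) (μ.menMatch m₀) := by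
    let _ := P.menPref m₀
    rw [h₀]
    exact (hμ.1.1 m₀).lt_of_ne (Ne.symm hm₀)
  have hμA (a : A) : μ.menMatch a ≠ none :=
    (P.menPref a).ne_none_of_le_of_lt (hν.1.1 a) a.2
  have step (a : A) : ∃ b : A, ν.menMatch b = μ.menMatch a := by
    obtain ⟨w, hw⟩ := Option.ne_none_iff_exists'.mp (hμA a)
    have hwν := lt_womenMatch_of_lt_menMatch hν.2 a.2 hw
    obtain ⟨m, hm⟩ := Option.ne_none_iff_exists'.mp
      ((P.womenPref w).ne_none_of_le_of_lt (hμ.1.2 w) hwν)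
    exact ⟨⟨m, lt_menMatch_of_lt_womenMatch hμ.2 hwν hm⟩, by
      rw [(ν.consistent m w).mpr hm, hw]⟩
  choose g hg using step
  have hg_inj : Function.Injective g := fun a b hab => by
    obtain ⟨w, hw⟩ := Option.ne_none_iff_exists'.mp (hμA a)
    have hbw : μ.menMatch b = some w := by rw [← hg b, ← hab, hg a, hw]
    exact Subtype.ext (μ.eq_of_menMatch_eq_some_s2 hw hbw)
  obtain ⟨a, ha⟩ := Finite.injective_iff_surjective.mp hg_inj ⟨m₀, hA₀⟩
  exact hμA a (by rw [← hg a, ha, h₀])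

/-- the set of unmatched agents is the same across all stable
matchings at a given profile (McVitie-Wilson lone wolf theorem). -/
theorem lone_wolf [Fintype M] [Fintype W] (P : Profile M W)
    (mu nu : Matching M W) (hmu : Stable mu P) (hnu : Stable nu P) :
    (∀ m : M, mu.menMatch m = none ↔ nu.menMatch m = none) ∧
    (∀ w : W, mu.womenMatch w = none ↔ nu.womenMatch w = none) :=
  ⟨fun _ => ⟨hnu.menMatch_eq_none hmu, hmu.menMatch_eq_none hnu⟩,
    fun _ => ⟨hnu.dual.menMatch_eq_none hmu.dual, hmu.dual.menMatch_eq_none hnu.dual⟩⟩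
end

section
/- Blocking Lemma: Let μ be any matching that is individually rational at profile P, and let M' be the set of men who strictly prefer their match under μ to their match under the men-optimal stable matching D^M(P). If M' is nonempty, then there exists a pair (m, w) with m ∈ M \ M' and w ∈ μ(M') that blocks μ at P. -/
variable {M W : Type*}

namespace BlockingAux
open scoped Classical

variable [Fintype M] [Fintype W]

noncomputable def choiceda (P : Profile M W) (m : M) (R : Finset W) : Option W :=
  letI := P.menPref m
  (Finset.univ.filter (fun o : Option W => ∀ w, o = some w → w ∉ R)).max'
    ⟨none, by simp⟩

lemma choiceda_notmem (P : Profile M W) (m : M) (R : Finset W) {w : W}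
    (h : choiceda P m R = some w) : w ∉ R := by
  letI := P.menPref m
  have hm := Finset.max'_mem
    (Finset.univ.filter (fun o : Option W => ∀ w, o = some w → w ∉ R))
    ⟨none, by simp⟩
  rw [Finset.mem_filter] at hm
  exact hm.2 w h

lemma le_choiceda (P : Profile M W) (m : M) (R : Finset W) {o : Option W}
    (ho : ∀ w, o = some w → w ∉ R) : (P.menPref m).le o (choiceda P m R) := by
  letI := P.menPref m
  exact Finset.le_max' _ o (by simpa using ho)

lemma none_le_choiceda (P : Profile M W) (m : M) (R : Finset W) :
    (P.menPref m).le none (choiceda P m R) :=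
  le_choiceda P m R (by simp)

lemma choiceda_anti (P : Profile M W) (m : M) {R R' : Finset W} (h : R ⊆ R') :
    (P.menPref m).le (choiceda P m R') (choiceda P m R) := by
  apply le_choiceda
  intro w hw
  exact fun hc => choiceda_notmem P m R' hw (h hc)

noncomputable def ceilda (P : Profile M W) (R : M → Finset W) (w : W) : Option M :=
  letI := P.womenPref w
  (insert none ((Finset.univ.filter (fun m => choiceda P m (R m) = some w)).image some)).max'
    ⟨none, Finset.mem_insert_self _ _⟩

lemma none_le_ceilda (P : Profile M W) (R : M → Finset W) (w : W) :
    (P.womenPref w).le none (ceilda P R w) := by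
  letI := P.womenPref w
  exact Finset.le_max' _ none (Finset.mem_insert_self _ _)

lemma le_ceilda (P : Profile M W) (R : M → Finset W) {w : W} {m : M}
    (h : choiceda P m (R m) = some w) : (P.womenPref w).le (some m) (ceilda P R w) := by
  letI := P.womenPref w
  exact Finset.le_max' _ (some m) (by simp [h])

lemma ceilda_cases (P : Profile M W) (R : M → Finset W) (w : W) :
    ceilda P R w = none ∨
      ∃ m : M, choiceda P m (R m) = some w ∧ ceilda P R w = some m := by
  letI := P.womenPref w
  have hm := Finset.max'_mem
    (insert none ((Finset.univ.filter (fun m => choiceda P m (R m) = some w)).image some))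
    ⟨none, Finset.mem_insert_self _ _⟩
  rw [Finset.mem_insert] at hm
  rcases hm with h | h
  · exact Or.inl h
  · rw [Finset.mem_image] at h
    obtain ⟨m, hm1, hm2⟩ := h
    rw [Finset.mem_filter] at hm1
    exact Or.inr ⟨m, hm1.2, hm2.symm⟩

noncomputable def stepda (P : Profile M W) (R : M → Finset W) : M → Finset W :=
  fun m => R m ∪ Finset.univ.filter
    (fun w => choiceda P m (R m) = some w ∧ (P.womenPref w).lt (some m) (ceilda P R w))

lemma mem_stepda (P : Profile M W) (R : M → Finset W) (m : M) (w : W) :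
    w ∈ stepda P R m ↔ w ∈ R m ∨
      (choiceda P m (R m) = some w ∧ (P.womenPref w).lt (some m) (ceilda P R w)) := by
  simp [stepda]

lemma subset_stepda (P : Profile M W) (R : M → Finset W) (m : M) :
    R m ⊆ stepda P R m := Finset.subset_union_left

noncomputable def iterda (P : Profile M W) : ℕ → M → Finset W :=
  fun n => (stepda P)^[n] (fun _ => ∅)

lemma iterda_zero (P : Profile M W) : iterda P 0 = fun _ => (∅ : Finset W) := rfl

lemma iterda_succ (P : Profile M W) (n : ℕ) :
    iterda P (n + 1) = stepda P (iterda P n) := Function.iterate_succ_apply' _ _ _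

lemma iterda_mono (P : Profile M W) {n n' : ℕ} (h : n ≤ n') (m : M) :
    iterda P n m ⊆ iterda P n' m := by
  induction n' with
  | zero => simp_all
  | succ k ih =>
    rcases Nat.lt_or_ge n (k+1) with hlt | hge
    · exact (ih (Nat.lt_succ_iff.mp hlt)).trans
        (by rw [iterda_succ]; exact subset_stepda P _ m)
    · have : n = k + 1 := le_antisymm h hge
      subst this; exact subset_refl _


set_option linter.unusedSectionVars false

lemma sum_lt_of_step_ne (P : Profile M W) (R : M → Finset W) (h : stepda P R ≠ R) :
    ∑ m, (R m).card < ∑ m, (stepda P R m).card := by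
  obtain ⟨m0, hm0⟩ := Function.ne_iff.mp h
  refine Finset.sum_lt_sum (fun m _ => Finset.card_le_card (subset_stepda P R m)) ?_
  exact ⟨m0, Finset.mem_univ _, Finset.card_lt_card
    (HasSubset.Subset.ssubset_of_ne (subset_stepda P R m0) (Ne.symm hm0))⟩

lemma exists_fix (P : Profile M W) : ∃ n, stepda P (iterda P n) = iterda P n := by
  by_contra hc
  push_neg at hc
  have key : ∀ n, n ≤ ∑ m, (iterda P n m).card := by
    intro n
    induction n with
    | zero => simp
    | succ k ih =>
      have h2 := sum_lt_of_step_ne P (iterda P k) (hc k)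
      rw [← iterda_succ] at h2
      omega
  have h1 := key (Fintype.card M * Fintype.card W + 1)
  have h2 : ∑ m, (iterda P (Fintype.card M * Fintype.card W + 1) m).card ≤
      Fintype.card M * Fintype.card W := by
    calc ∑ m, (iterda P (Fintype.card M * Fintype.card W + 1) m).card
        ≤ ∑ _m : M, Fintype.card W :=
          Finset.sum_le_sum (fun m _ => Finset.card_le_card (Finset.subset_univ _))
      _ = Fintype.card M * Fintype.card W := by simp [Finset.sum_const, mul_comm]
  omega

noncomputable def Tfix (P : Profile M W) : ℕ := Nat.find (exists_fix P)

noncomputable def Rfix (P : Profile M W) : M → Finset W := iterda P (Tfix P)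

lemma step_Rfix (P : Profile M W) : stepda P (Rfix P) = Rfix P :=
  Nat.find_spec (exists_fix P)

lemma iterda_eq_of_ge (P : Profile M W) {n : ℕ} (h : Tfix P ≤ n) :
    iterda P n = Rfix P := by
  induction n with
  | zero =>
    show iterda P 0 = iterda P (Tfix P)
    rw [Nat.le_zero.mp h]
  | succ k ih =>
    rcases Nat.lt_or_ge k (Tfix P) with hlt | hge
    · have heq : Tfix P = k + 1 := le_antisymm h hlt
      show iterda P (k+1) = iterda P (Tfix P)
      rw [heq]
    · rw [iterda_succ, ih hge, step_Rfix]

noncomputable def menM (P : Profile M W) (m : M) : Option W := choiceda P m (Rfix P m)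

lemma menM_inj (P : Profile M W) {m m' : M} {w : W}
    (h : menM P m = some w) (h' : menM P m' = some w) : m = m' := by
  letI := P.womenPref w
  by_contra hne
  have key : ∀ a b : M, menM P a = some w → menM P b = some w →
      ¬ (P.womenPref w).lt (some a) (some b) := by
    intro a b ha hb hlt
    have hceil : (P.womenPref w).le (some b) (ceilda P (Rfix P) w) := le_ceilda P _ hb
    have hlt2 : (P.womenPref w).lt (some a) (ceilda P (Rfix P) w) := lt_of_lt_of_le hlt hceil
    have hmem : w ∈ stepda P (Rfix P) a := by
      rw [mem_stepda]; exact Or.inr ⟨ha, hlt2⟩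
    rw [step_Rfix] at hmem
    exact choiceda_notmem P a _ ha hmem
  rcases lt_or_gt_of_ne (show (some m : Option M) ≠ some m' by simpa using hne) with hl | hl
  · exact key m m' h h' hl
  · exact key m' m h' h hl

noncomputable def womenM (P : Profile M W) (w : W) : Option M :=
  if h : ∃ m, menM P m = some w then some h.choose else none

lemma menM_womenM (P : Profile M W) (m : M) (w : W) :
    menM P m = some w ↔ womenM P w = some m := by
  unfold womenM
  constructor
  · intro h
    have he : ∃ m, menM P m = some w := ⟨m, h⟩
    rw [dif_pos he]
    exact congrArg some (menM_inj P he.choose_spec h)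
  · intro h
    by_cases he : ∃ m, menM P m = some w
    · rw [dif_pos he] at h
      obtain rfl : he.choose = m := by injection h
      exact he.choose_spec
    · rw [dif_neg he] at h; exact absurd h (by simp)

noncomputable def daMatching (P : Profile M W) : Matching M W :=
  ⟨menM P, womenM P, menM_womenM P⟩

lemma daMatching_men (P : Profile M W) (m : M) :
    (daMatching P).menMatch m = menM P m := rfl

lemma daMatching_women (P : Profile M W) (w : W) :
    (daMatching P).womenMatch w = womenM P w := rfl

lemma ceilda_mono (P : Profile M W) {n n' : ℕ} (h : n ≤ n') (w : W) :
    (P.womenPref w).le (ceilda P (iterda P n) w) (ceilda P (iterda P n') w) := by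
  letI := P.womenPref w
  induction n' with
  | zero => rw [Nat.le_zero.mp h]
  | succ k ih =>
    rcases Nat.lt_or_ge n (k+1) with hlt | hge
    · refine le_trans (ih (Nat.lt_succ_iff.mp hlt)) ?_
      rcases ceilda_cases P (iterda P k) w with hc | ⟨m, hm, hc⟩
      · rw [hc]; exact none_le_ceilda P _ w
      · have heq : iterda P (k+1) m = iterda P k m := by
          rw [iterda_succ]
          apply Finset.Subset.antisymm
          · intro w' hw'
            rw [mem_stepda] at hw'
            rcases hw' with h1 | ⟨h1, h2⟩
            · exact h1
            · rw [hm] at h1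
              obtain rfl : w = w' := by injection h1
              rw [hc] at h2
              exact absurd h2 (lt_irrefl _)
          · exact subset_stepda P _ m
        have : choiceda P m (iterda P (k+1) m) = some w := by rw [heq]; exact hm
        rw [hc]
        exact le_ceilda P _ this
    · have : n = k + 1 := le_antisymm h hge
      subst this; exact le_refl _

lemma mem_iter_lt_ceil (P : Profile M W) (n : ℕ) (m : M) (w : W)
    (h : w ∈ iterda P n m) :
    (P.womenPref w).lt (some m) (ceilda P (iterda P n) w) := by
  letI := P.womenPref w
  induction n with
  | zero => simp [iterda_zero] at h
  | succ k ih =>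
    rw [iterda_succ, mem_stepda] at h
    rcases h with h | ⟨_, h2⟩
    · exact lt_of_lt_of_le (ih h) (ceilda_mono P (Nat.le_succ k) w)
    · exact lt_of_lt_of_le h2 (ceilda_mono P (Nat.le_succ k) w)

lemma ceilda_fix_eq (P : Profile M W) (w : W) :
    ceilda P (Rfix P) w = (daMatching P).womenMatch w := by
  letI := P.womenPref w
  rcases ceilda_cases P (Rfix P) w with hc | ⟨m, hm, hc⟩
  · rw [hc]
    have : ¬ ∃ m, menM P m = some w := by
      rintro ⟨m, hm⟩
      have h1 : (P.womenPref w).le (some m) (ceilda P (Rfix P) w) := le_ceilda P _ hm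
      rw [hc] at h1
      have h2 : (some m : Option M) ≠ none := by simp
      have h3 : (P.womenPref w).lt (some m) (ceilda P (Rfix P) w) := by
        rw [hc]; exact lt_of_le_of_ne h1 h2
      have hmem : w ∈ stepda P (Rfix P) m := by
        rw [mem_stepda]; exact Or.inr ⟨hm, h3⟩
      rw [step_Rfix] at hmem
      exact choiceda_notmem P m _ hm hmem
    rw [daMatching_women]
    unfold womenM
    rw [dif_neg this]
  · have he : ∃ m', menM P m' = some w := ⟨m, hm⟩
    have h4 : (daMatching P).womenMatch w = some m := by
      rw [daMatching_women]; unfold womenM; rw [dif_pos he]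
      exact congrArg some (menM_inj P he.choose_spec hm)
    rw [h4, hc]

lemma rejected_lt_match (P : Profile M W) {m : M} {w : W} (h : w ∈ Rfix P m) :
    (P.womenPref w).lt (some m) ((daMatching P).womenMatch w) := by
  have := mem_iter_lt_ceil P (Tfix P) m w h
  rwa [show iterda P (Tfix P) = Rfix P from rfl, ceilda_fix_eq] at this

lemma daStable (P : Profile M W) : Stable (daMatching P) P := by
  constructor
  · constructor
    · intro m; exact none_le_choiceda P m _
    · intro w; rw [← ceilda_fix_eq]; exact none_le_ceilda P _ w
  · rintro m w ⟨h1, h2⟩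
    letI := P.womenPref w
    by_cases hmem : w ∈ Rfix P m
    · exact absurd (rejected_lt_match P hmem) (asymm h2)
    · letI := P.menPref m
      have hle1 : (P.menPref m).le (some w) (menM P m) := by
        apply le_choiceda
        intro w' hw'
        obtain rfl : w = w' := by injection hw'
        exact hmem
      exact absurd h1 (not_lt_of_ge hle1)

lemma notRejected_of_stable (P : Profile M W) (ν : Matching M W) (hν : Stable ν P)
    (n : ℕ) (m : M) (w : W) (h : ν.menMatch m = some w) : w ∉ iterda P n m := by
  induction n generalizing m w with
  | zero => simp [iterda_zero]
  | succ k ih =>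
    intro hmem
    rw [iterda_succ, mem_stepda] at hmem
    rcases hmem with h1 | ⟨h1, h2⟩
    · exact ih m w h h1
    · letI := P.womenPref w
      have hwm : ν.womenMatch w = some m := (ν.consistent m w).mp h
      rcases ceilda_cases P (iterda P k) w with hc | ⟨m'', hm'', hc⟩
      · rw [hc] at h2
        have := hν.1.1  -- men IR, not needed
        have hIRw : (P.womenPref w).le none (ν.womenMatch w) := hν.1.2 w
        rw [hwm] at hIRw
        exact absurd (lt_of_lt_of_le h2 hIRw) (lt_irrefl _)
      · rw [hc] at h2
        have hne : m ≠ m'' := by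
          intro heq; rw [heq] at h2; exact lt_irrefl _ h2
        apply hν.2 m'' w
        constructor
        · letI := P.menPref m''
          have hle : (P.menPref m'').le (ν.menMatch m'') (choiceda P m'' (iterda P k m'')) := by
            apply le_choiceda
            intro w' hw'
            exact ih m'' w' hw'
          rw [hm''] at hle
          refine lt_of_le_of_ne hle ?_
          intro heq
          have h5 : ν.womenMatch w = some m'' := (ν.consistent m'' w).mp heq
          rw [hwm] at h5
          exact hne (by injection h5)
        · rw [hwm]; exact h2

lemma daOptimal (P : Profile M W) : MenOptimalStable (daMatching P) P := by
  refine ⟨daStable P, fun ν hν m => ?_⟩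
  show (P.menPref m).le (ν.menMatch m) (menM P m)
  apply le_choiceda
  intro w hw
  exact notRejected_of_stable P ν hν (Tfix P) m w hw

lemma mpda_menMatch (P : Profile M W) (m : M) :
    (mpda P).menMatch m = menM P m := by
  have hex : ∃ μ : Matching M W, MenOptimalStable μ P := ⟨daMatching P, daOptimal P⟩
  have hopt : MenOptimalStable (mpda P) P := by
    unfold mpda
    rw [dif_pos hex]
    exact hex.choose_spec
  letI := P.menPref m
  have h1 := hopt.2 (daMatching P) (daStable P) m
  have h2 := (daOptimal P).2 (mpda P) hopt.1 m
  exact le_antisymm h2 h1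

noncomputable def propd (P : Profile M W) (n : ℕ) (m : M) : Option W :=
  choiceda P m (iterda P n m)

lemma propd_anti (P : Profile M W) {n n' : ℕ} (h : n ≤ n') (m : M) :
    (P.menPref m).le (propd P n' m) (propd P n m) :=
  choiceda_anti P m (iterda_mono P h m)

lemma propd_fix (P : Profile M W) {n : ℕ} (h : Tfix P ≤ n) (m : M) :
    propd P n m = menM P m := by
  unfold propd menM
  rw [iterda_eq_of_ge P h]

noncomputable def sdef (P : Profile M W) (m : M) : ℕ :=
  Nat.find (⟨Tfix P, propd_fix P le_rfl m⟩ : ∃ n, propd P n m = menM P m)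

lemma sdef_spec (P : Profile M W) (m : M) : propd P (sdef P m) m = menM P m :=
  Nat.find_spec (⟨Tfix P, propd_fix P le_rfl m⟩ : ∃ n, propd P n m = menM P m)

lemma sdef_le_Tfix (P : Profile M W) (m : M) : sdef P m ≤ Tfix P :=
  Nat.find_le (propd_fix P le_rfl m)

lemma propd_of_ge_sdef (P : Profile M W) {t : ℕ} {m : M} (h : sdef P m ≤ t) :
    propd P t m = menM P m := by
  letI := P.menPref m
  have h1 : (P.menPref m).le (propd P t m) (propd P (sdef P m) m) := propd_anti P h m
  rw [sdef_spec] at h1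
  have h2 : (P.menPref m).le (propd P (max t (Tfix P)) m) (propd P t m) :=
    propd_anti P (le_max_left _ _) m
  rw [propd_fix P (le_max_right _ _) m] at h2
  exact le_antisymm h1 h2

lemma propd_ne_of_lt_sdef (P : Profile M W) {t : ℕ} {m : M} (h : t < sdef P m) :
    propd P t m ≠ menM P m :=
  Nat.find_min _ h

lemma iter_succ_eq_of_held (P : Profile M W) {k : ℕ} {m : M} {w : W}
    (hm : choiceda P m (iterda P k m) = some w)
    (hc : ceilda P (iterda P k) w = some m) :
    iterda P (k + 1) m = iterda P k m := by
  letI := P.womenPref w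
  rw [iterda_succ]
  apply Finset.Subset.antisymm
  · intro w' hw'
    rw [mem_stepda] at hw'
    rcases hw' with h1 | ⟨h1, h2⟩
    · exact h1
    · rw [hm] at h1
      obtain rfl : w = w' := by injection h1
      rw [hc] at h2
      exact absurd h2 (lt_irrefl _)
  · exact subset_stepda P _ m

lemma exists_reject (P : Profile M W) {m : M} {w : W} (h : w ∈ Rfix P m) :
    ∃ r, propd P r m = some w ∧
      (P.womenPref w).lt (some m) (ceilda P (iterda P r) w) := by
  have hex : ∃ n, w ∈ iterda P (n + 1) m := by
    refine ⟨Tfix P, ?_⟩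
    exact iterda_mono P (Nat.le_succ _) m h
  set r := Nat.find hex with hr
  have hmem : w ∈ iterda P (r + 1) m := Nat.find_spec hex
  have hnot : w ∉ iterda P r m := by
    intro hcon
    rcases Nat.eq_zero_or_pos r with h0 | h0
    · rw [h0] at hcon; simp [iterda_zero] at hcon
    · have : r - 1 < r := by omega
      apply Nat.find_min hex this
      have : r - 1 + 1 = r := by omega
      rw [this]; exact hcon
  rw [iterda_succ, mem_stepda] at hmem
  rcases hmem with h1 | ⟨h1, h2⟩
  · exact absurd h1 hnot
  · exact ⟨r, h1, h2⟩

end BlockingAux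

set_option maxHeartbeats 1000000 in
/-- Blocking lemma: if `mu` is individually rational at `P` and the
set `M'` of men strictly preferring `mu` to the men-optimal stable matching is
nonempty, some pair `(m, w)` with `m ∉ M'` and `w` matched by `mu` to a man of
`M'` blocks `mu` at `P`. -/
theorem blocking_lemma [Fintype M] [Fintype W] (P : Profile M W)
    (mu : Matching M W) (hIR : IndividuallyRational mu P)
    (M' : Set M) (hM' : M' = {m : M | (P.menPref m).lt ((mpda P).menMatch m) (mu.menMatch m)})
    (hne : M'.Nonempty) :
    ∃ (m : M) (w : W), m ∉ M' ∧ (∃ m' ∈ M', mu.menMatch m' = some w) ∧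
      Blocks m w mu P := by
  classical
  open BlockingAux in
  obtain ⟨m0, hm0⟩ := hne
  have hmem : ∀ m, m ∈ M' ↔ (P.menPref m).lt (BlockingAux.menM P m) (mu.menMatch m) := by
    intro m
    rw [hM']
    simp only [Set.mem_setOf_eq, BlockingAux.mpda_menMatch]
  have hmatched : ∀ m ∈ M', ∃ w, mu.menMatch m = some w := by
    intro m hm
    cases heq : mu.menMatch m with
    | some w => exact ⟨w, rfl⟩
    | none =>
      letI := P.menPref m
      have h1 := (hmem m).mp hm
      rw [heq] at h1
      exact absurd (lt_of_le_of_lt (BlockingAux.none_le_choiceda P m _) h1) (lt_irrefl _)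
  by_cases hcase : ∀ w : W, (∃ m' ∈ M', mu.menMatch m' = some w) →
      ∃ m'' ∈ M', BlockingAux.menM P m'' = some w
  · -- Case 2: μ(M') ⊆ menM(M')
    set A : Finset M := Finset.univ.filter (· ∈ M') with hA
    have hmemA : ∀ m, m ∈ A ↔ m ∈ M' := by intro m; simp [hA]
    have hAne : A.Nonempty := ⟨m0, (hmemA m0).mpr hm0⟩
    have hinj : Set.InjOn mu.menMatch (A : Set M) := by
      intro a ha b hb hab
      obtain ⟨w, hw⟩ := hmatched a ((hmemA a).mp ha)
      have h1 : mu.womenMatch w = some a := (mu.consistent a w).mp hw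
      have h2 : mu.womenMatch w = some b := (mu.consistent b w).mp (by rw [← hab]; exact hw)
      rw [h1] at h2
      injection h2
    have hcardB : (A.image mu.menMatch).card = A.card := Finset.card_image_of_injOn hinj
    have hBsub : A.image mu.menMatch ⊆ A.image (BlockingAux.menM P) := by
      intro b hb
      rw [Finset.mem_image] at hb ⊢
      obtain ⟨m', hm'A, hm'⟩ := hb
      have hm'M : m' ∈ M' := (hmemA m').mp hm'A
      obtain ⟨w, hw⟩ := hmatched m' hm'M
      obtain ⟨m'', hm''M, hm''⟩ := hcase w ⟨m', hm'M, hw⟩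
      exact ⟨m'', (hmemA m'').mpr hm''M, by rw [hm'', ← hw, hm']⟩
    have hBeq : A.image mu.menMatch = A.image (BlockingAux.menM P) :=
      Finset.eq_of_subset_of_card_le hBsub (by rw [hcardB]; exact Finset.card_image_le)
    have hMmatched : ∀ m ∈ M', ∃ w, BlockingAux.menM P m = some w ∧
        ∃ m2 ∈ M', mu.menMatch m2 = some w := by
      intro m hm
      have h1 : BlockingAux.menM P m ∈ A.image (BlockingAux.menM P) :=
        Finset.mem_image_of_mem _ ((hmemA m).mpr hm)
      rw [← hBeq, Finset.mem_image] at h1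
      obtain ⟨m2, hm2A, hm2⟩ := h1
      have hm2M : m2 ∈ M' := (hmemA m2).mp hm2A
      obtain ⟨w, hw⟩ := hmatched m2 hm2M
      exact ⟨w, by rw [← hm2, hw], m2, hm2M, hw⟩
    obtain ⟨m1, hm1A, hmax⟩ := Finset.exists_max_image A (BlockingAux.sdef P) hAne
    have hm1M : m1 ∈ M' := (hmemA m1).mp hm1A
    obtain ⟨w1, hw1, m2, hm2M, hmu2⟩ := hMmatched m1 hm1M
    -- m2 strictly prefers w1 (= mu m2) to menM m2
    have hlt2 : (P.menPref m2).lt (BlockingAux.menM P m2) (some w1) := by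
      have := (hmem m2).mp hm2M
      rwa [hmu2] at this
    have hrej : w1 ∈ BlockingAux.Rfix P m2 := by
      by_contra hcon
      letI := P.menPref m2
      have : (P.menPref m2).le (some w1) (BlockingAux.menM P m2) := by
        apply BlockingAux.le_choiceda
        intro w' hw'
        obtain rfl : w1 = w' := by injection hw'
        exact hcon
      exact absurd hlt2 (not_lt_of_ge this)
    obtain ⟨r, hr1, hr2⟩ := BlockingAux.exists_reject P hrej
    have hrlt : r < BlockingAux.sdef P m2 := by
      by_contra hcon
      push_neg at hcon
      rw [BlockingAux.propd_of_ge_sdef P hcon] at hr1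
      rw [hr1] at hlt2
      letI := P.menPref m2
      exact lt_irrefl _ hlt2
    set tstar := BlockingAux.sdef P m1 with htstar
    have hm2le : BlockingAux.sdef P m2 ≤ tstar := hmax m2 ((hmemA m2).mpr hm2M)
    have htpos : 1 ≤ tstar := by omega
    set u := tstar - 1 with hu
    have huu : u + 1 = tstar := by omega
    have hru : r ≤ u := by omega
    letI := P.womenPref w1
    have hceil : (P.womenPref w1).lt (some m2) (ceilda P (BlockingAux.iterda P u) w1) :=
      lt_of_lt_of_le hr2 (BlockingAux.ceilda_mono P hru w1)
    have hmuw1 : mu.womenMatch w1 = some m2 := (mu.consistent m2 w1).mp hmu2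
    have hnone : (P.womenPref w1).le none (some m2) := by
      have := hIR.2 w1
      rwa [hmuw1] at this
    rcases BlockingAux.ceilda_cases P (BlockingAux.iterda P u) w1 with hc | ⟨m, hm, hc⟩
    · rw [hc] at hceil
      exact absurd (lt_of_le_of_lt hnone hceil) (lt_irrefl _)
    rw [hc] at hceil
    -- m proposes to w1 at time u and u+1
    have hiter : BlockingAux.iterda P (u + 1) m = BlockingAux.iterda P u m :=
      BlockingAux.iter_succ_eq_of_held P hm hc
    have hpropu : BlockingAux.propd P u m = some w1 := hm
    have hproptstar : BlockingAux.propd P tstar m = some w1 := by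
      rw [← huu]
      show BlockingAux.choiceda P m (BlockingAux.iterda P (u+1) m) = some w1
      rw [hiter]; exact hm
    have hmnot : m ∉ M' := by
      intro hmM
      have hsle : BlockingAux.sdef P m ≤ tstar := hmax m ((hmemA m).mpr hmM)
      have h1 : BlockingAux.menM P m = some w1 := by
        rw [← BlockingAux.propd_of_ge_sdef P hsle]; exact hproptstar
      have heqm : m = m1 := BlockingAux.menM_inj P h1 hw1
      have h2 : BlockingAux.propd P u m1 ≠ BlockingAux.menM P m1 :=
        BlockingAux.propd_ne_of_lt_sdef P (by omega)
      rw [← heqm] at h2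
      exact h2 (by rw [hpropu, ← heqm] at *; rw [hpropu]; rw [heqm, hw1] at *; rw [h1])
    refine ⟨m, w1, hmnot, ⟨m2, hm2M, hmu2⟩, ?_, ?_⟩
    · -- lt (mu.menMatch m) (some w1)
      letI := P.menPref m
      have hle1 : (P.menPref m).le (mu.menMatch m) (BlockingAux.menM P m) := by
        have := (hmem m).not.mp hmnot
        exact le_of_not_gt this
      have hle2 : (P.menPref m).le (BlockingAux.menM P m) (BlockingAux.propd P u m) := by
        apply BlockingAux.choiceda_anti
        exact BlockingAux.iterda_mono P (by
          have := BlockingAux.sdef_le_Tfix P m1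
          omega) m
      rw [hpropu] at hle2
      have hlt3 : mu.menMatch m ≠ some w1 := by
        intro hcon
        have : mu.womenMatch w1 = some m := (mu.consistent m w1).mp hcon
        rw [hmuw1] at this
        obtain rfl : m2 = m := by injection this
        exact lt_irrefl _ hceil
      exact lt_of_le_of_ne (le_trans hle1 hle2) hlt3
    · rw [hmuw1]
      exact hceil
  · -- Case 1
    push_neg at hcase
    obtain ⟨w, ⟨m', hm'M, hmu'⟩, hnomatch⟩ := hcase
    set ν := BlockingAux.daMatching P with hν
    have hblock : ¬ Blocks m' w ν P := (BlockingAux.daStable P).2 m' w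
    have h1 : (P.menPref m').lt (ν.menMatch m') (some w) := by
      have := (hmem m').mp hm'M
      rwa [hmu'] at this
    letI := P.womenPref w
    have h2 : (P.womenPref w).le (some m') (ν.womenMatch w) := by
      by_contra hcon
      exact hblock ⟨h1, lt_of_not_ge hcon⟩
    have hmuw : mu.womenMatch w = some m' := (mu.consistent m' w).mp hmu'
    cases hνw : ν.womenMatch w with
    | none =>
      rw [hνw] at h2
      have h3 : (P.womenPref w).le none (some m') := by
        have := hIR.2 w
        rwa [hmuw] at this
      have : (some m' : Option M) = none := le_antisymm h2 h3
      exact absurd this (by simp)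
    | some m =>
      have hmenm : BlockingAux.menM P m = some w := (ν.consistent m w).mpr hνw
      have hmnot : m ∉ M' := fun hmM => hnomatch m hmM hmenm
      have hne' : m' ≠ m := by
        intro heq
        rw [heq] at hm'M
        exact hnomatch m hm'M hmenm
      rw [hνw] at h2
      have hlt : (P.womenPref w).lt (some m') (some m) :=
        lt_of_le_of_ne h2 (by simpa using hne')
      refine ⟨m, w, hmnot, ⟨m', hm'M, hmu'⟩, ?_, ?_⟩
      · letI := P.menPref m
        have hle1 : (P.menPref m).le (mu.menMatch m) (BlockingAux.menM P m) :=
          le_of_not_gt ((hmem m).not.mp hmnot)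
        rw [hmenm] at hle1
        have hne2 : mu.menMatch m ≠ some w := by
          intro hcon
          have := (mu.consistent m w).mp hcon
          rw [hmuw] at this
          exact hne' (Option.some_injective _ this)
        exact lt_of_le_of_ne hle1 hne2
      · rw [hmuw]
        exact hlt
end

section
/- If a coalition A' of agents manipulates the men-proposing deferred acceptance rule at some preference profile (i.e., there is a joint misreport after which every member of A' is strictly better off according to their true preferences), then A' consists only of women. -/
variable {M W : Type*}

/-- A coalition `(Sm, Sw)` manipulates the MPDA rule at `P` via the misreport
profile `Q` (which agrees with `P` outside the coalition): every coalition
member is strictly better off under true preferences. -/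
def MpdaManipulates (P Q : Profile M W) (Sm : Set M) (Sw : Set W) : Prop :=
  (∀ m ∉ Sm, Q.menPref m = P.menPref m) ∧
  (∀ w ∉ Sw, Q.womenPref w = P.womenPref w) ∧
  (∀ m ∈ Sm, (P.menPref m).lt ((mpda P).menMatch m) ((mpda Q).menMatch m)) ∧
  (∀ w ∈ Sw, (P.womenPref w).lt ((mpda P).womenMatch w) ((mpda Q).womenMatch w))

namespace MpdaAux
set_option linter.unusedSectionVars false
set_option linter.unusedVariables false

attribute [local instance] Classical.propDecidable

section OrderHelpers
variable {α : Type*} (L : LinearOrder α)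

theorem hle_trans {a b c : α} (h1 : L.le a b) (h2 : L.le b c) : L.le a c := by
  letI := L; exact le_trans h1 h2
theorem hle_of_lt {a b : α} (h : L.lt a b) : L.le a b := by letI := L; exact le_of_lt h
theorem hlt_of_lt_of_le {a b c : α} (h1 : L.lt a b) (h2 : L.le b c) : L.lt a c := by
  letI := L; exact lt_of_lt_of_le h1 h2
theorem hlt_of_le_of_lt {a b c : α} (h1 : L.le a b) (h2 : L.lt b c) : L.lt a c := by
  letI := L; exact lt_of_le_of_lt h1 h2
theorem hle_of_not_lt {a b : α} (h : ¬ L.lt a b) : L.le b a := by letI := L; exact not_lt.mp h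
theorem hlt_of_le_of_ne {a b : α} (h1 : L.le a b) (h2 : a ≠ b) : L.lt a b := by
  letI := L; exact lt_of_le_of_ne h1 h2
theorem hne_of_lt {a b : α} (h : L.lt a b) : a ≠ b := by letI := L; exact ne_of_lt h
theorem hlt_irrefl {a : α} (h : L.lt a a) : False := by letI := L; exact lt_irrefl a h
theorem hle_antisymm {a b : α} (h1 : L.le a b) (h2 : L.le b a) : a = b := by
  letI := L; exact le_antisymm h1 h2
theorem hle_refl (a : α) : L.le a a := by letI := L; exact le_refl a
theorem hnot_lt_of_le {a b : α} (h : L.le a b) : ¬ L.lt b a := by letI := L; exact not_lt.mpr h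

end OrderHelpers

noncomputable def best {α : Type*} (L : LinearOrder α) (s : Finset α) (h : s.Nonempty) : α :=
  @Finset.max' α L s h

theorem best_mem {α : Type*} (L : LinearOrder α) (s : Finset α) (h : s.Nonempty) :
    best L s h ∈ s := @Finset.max'_mem α L s h

theorem le_best {α : Type*} (L : LinearOrder α) (s : Finset α) (h : s.Nonempty) {x : α}
    (hx : x ∈ s) : L.le x (best L s h) := @Finset.le_max' α L s x hx

theorem best_congr {α : Type*} (L : LinearOrder α) {s t : Finset α} (hs : s.Nonempty)
    (ht : t.Nonempty) (h : s = t) : best L s hs = best L t ht := by subst h; rfl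

section DA
variable [Fintype M] [Fintype W] (P : Profile M W)

noncomputable def cands (A : M → Finset W) (m : M) : Finset (Option W) :=
  insert none ((Finset.univ.filter (fun w => w ∉ A m)).image some)

theorem cands_ne (A : M → Finset W) (m : M) : (cands A m).Nonempty :=
  ⟨none, Finset.mem_insert_self _ _⟩

theorem mem_cands {A : M → Finset W} {m : M} {w : W} : some w ∈ cands A m ↔ w ∉ A m := by
  simp [cands]

theorem none_mem_cands {A : M → Finset W} {m : M} : (none : Option W) ∈ cands A m :=
  Finset.mem_insert_self _ _

theorem cands_anti {A B : M → Finset W} {m : M} (h : A m ⊆ B m) : cands B m ⊆ cands A m := by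
  intro x hx
  match x with
  | none => exact none_mem_cands
  | some w => exact mem_cands.mpr (fun hw => mem_cands.mp hx (h hw))

noncomputable def prp (A : M → Finset W) (m : M) : Option W :=
  best (P.menPref m) (cands A m) (cands_ne A m)

theorem prp_mem (A : M → Finset W) (m : M) : prp P A m ∈ cands A m :=
  best_mem _ _ _

theorem le_prp {A : M → Finset W} {m : M} {x : Option W} (hx : x ∈ cands A m) :
    (P.menPref m).le x (prp P A m) := le_best _ _ _ hx

theorem prp_congr {A B : M → Finset W} {m : M} (h : A m = B m) : prp P A m = prp P B m :=
  best_congr _ _ _ (by unfold cands; rw [h])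

noncomputable def pers (A : M → Finset W) (w : W) : Finset (Option M) :=
  insert none ((Finset.univ.filter (fun m => prp P A m = some w)).image some)

theorem pers_ne (A : M → Finset W) (w : W) : (pers P A w).Nonempty :=
  ⟨none, Finset.mem_insert_self _ _⟩

theorem mem_pers {A : M → Finset W} {w : W} {m : M} :
    some m ∈ pers P A w ↔ prp P A m = some w := by simp [pers]

noncomputable def hold (A : M → Finset W) (w : W) : Option M :=
  best (P.womenPref w) (pers P A w) (pers_ne P A w)

theorem le_hold {A : M → Finset W} {m : M} {w : W} (h : prp P A m = some w) :
    (P.womenPref w).le (some m) (hold P A w) := le_best _ _ _ (mem_pers P |>.mpr h)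

theorem none_le_hold {A : M → Finset W} {w : W} :
    (P.womenPref w).le none (hold P A w) := le_best _ _ _ (Finset.mem_insert_self _ _)

theorem hold_prp {A : M → Finset W} {m : M} {w : W} (h : hold P A w = some m) :
    prp P A m = some w := by
  have := best_mem (P.womenPref w) (pers P A w) (pers_ne P A w)
  rw [show best (P.womenPref w) (pers P A w) (pers_ne P A w) = hold P A w from rfl, h] at this
  exact (mem_pers P).mp this

noncomputable def step (A : M → Finset W) : M → Finset W :=
  fun m => A m ∪ Finset.univ.filter (fun w => prp P A m = some w ∧ hold P A w ≠ some m)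

theorem mem_step {A : M → Finset W} {m : M} {w : W} :
    w ∈ step P A m ↔ w ∈ A m ∨ (prp P A m = some w ∧ hold P A w ≠ some m) := by
  simp [step]

theorem subset_step {A : M → Finset W} {m : M} : A m ⊆ step P A m :=
  fun w hw => (mem_step P).mpr (Or.inl hw)

theorem step_eq_of_hold {A : M → Finset W} {m : M} {w : W} (hp : prp P A m = some w)
    (hh : hold P A w = some m) : step P A m = A m := by
  ext w'
  rw [mem_step]
  constructor
  · rintro (h | ⟨hp', hne⟩)
    · exact h
    · rw [hp] at hp'
      cases Option.some_inj.mp hp'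
      exact absurd hh hne
  · exact Or.inl

theorem hold_le_step (A : M → Finset W) (w : W) :
    (P.womenPref w).le (hold P A w) (hold P (step P A) w) := by
  cases h : hold P A w with
  | none => exact none_le_hold P
  | some m =>
    have hp : prp P A m = some w := hold_prp P h
    have hs : step P A m = A m := step_eq_of_hold P hp h
    have : prp P (step P A) m = some w := (prp_congr P hs).trans hp
    exact le_best _ _ _ ((mem_pers P).mpr this)

noncomputable def Aseq : ℕ → M → Finset W
  | 0 => fun _ => ∅
  | n+1 => step P (Aseq n)

theorem Aseq_succ (n : ℕ) : Aseq P (n+1) = step P (Aseq P n) := rfl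

theorem Aseq_mono {n n' : ℕ} (h : n ≤ n') (m : M) : Aseq P n m ⊆ Aseq P n' m := by
  induction n' with
  | zero => cases Nat.le_zero.mp h; exact fun _ h => h
  | succ k ih =>
    rcases Nat.lt_or_ge n (k+1) with hlt | hge
    · exact fun w hw => subset_step P (ih (Nat.lt_succ_iff.mp hlt) hw)
    · cases Nat.le_antisymm h hge; exact fun _ h => h

noncomputable def pt (n : ℕ) (m : M) : Option W := prp P (Aseq P n) m
noncomputable def ht (n : ℕ) (w : W) : Option M := hold P (Aseq P n) w

theorem pt_anti {n n' : ℕ} (h : n ≤ n') (m : M) :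
    (P.menPref m).le (pt P n' m) (pt P n m) :=
  le_prp P (cands_anti (Aseq_mono P h m) (prp_mem P _ m))

theorem ht_mono {n n' : ℕ} (h : n ≤ n') (w : W) :
    (P.womenPref w).le (ht P n w) (ht P n' w) := by
  induction n' with
  | zero => cases Nat.le_zero.mp h; exact hle_refl _ _
  | succ k ih =>
    rcases Nat.lt_or_ge n (k+1) with hlt | hge
    · exact hle_trans _ (ih (Nat.lt_succ_iff.mp hlt)) (hold_le_step P (Aseq P k) w)
    · cases Nat.le_antisymm h hge; exact hle_refl _ _

theorem pt_sandwich {n1 n2 n3 : ℕ} (h1 : n1 ≤ n2) (h2 : n2 ≤ n3) {m : M}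
    (he : pt P n1 m = pt P n3 m) : pt P n2 m = pt P n1 m := by
  refine hle_antisymm _ (pt_anti P h1 m) ?_
  rw [he]; exact pt_anti P h2 m

theorem reject_step {n : ℕ} {m : M} {w : W} (hw : w ∈ Aseq P (n+1) m)
    (hw' : w ∉ Aseq P n m) : pt P n m = some w ∧ ht P n w ≠ some m := by
  rcases (mem_step P).mp hw with h | h
  · exact absurd h hw'
  · exact h

theorem persist {n : ℕ} {m : M} {w : W} (h : ht P n w = some m) :
    pt P (n+1) m = pt P n m :=
  prp_congr P (step_eq_of_hold P (hold_prp P h) h)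

theorem ht_prp {n : ℕ} {m : M} {w : W} (h : ht P n w = some m) : pt P n m = some w :=
  hold_prp P h

theorem le_ht {n : ℕ} {m : M} {w : W} (h : pt P n m = some w) :
    (P.womenPref w).le (some m) (ht P n w) := le_hold P h

theorem not_mem_of_pt {n : ℕ} {m : M} {w : W} (h : pt P n m = some w) :
    w ∉ Aseq P n m := mem_cands.mp (h ▸ prp_mem P (Aseq P n) m)

theorem inv1 : ∀ (n : ℕ) (m : M) (w : W), w ∈ Aseq P n m →
    (P.womenPref w).lt (some m) (ht P n w) := by
  intro n
  induction n with
  | zero => intro m w hw; simp [Aseq] at hw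
  | succ k ih =>
    intro m w hw
    by_cases hmem : w ∈ Aseq P k m
    · exact hlt_of_lt_of_le _ (ih m w hmem) (ht_mono P (Nat.le_succ k) w)
    · obtain ⟨hp, hh⟩ := reject_step P hw hmem
      have h1 : (P.womenPref w).lt (some m) (ht P k w) :=
        hlt_of_le_of_ne _ (le_ht P hp) (fun he => hh he.symm)
      exact hlt_of_lt_of_le _ h1 (ht_mono P (Nat.le_succ k) w)

theorem inv2 : ∀ (n : ℕ) (ν : Matching M W), Stable ν P → ∀ (m : M) (w : W),
    w ∈ Aseq P n m → ν.menMatch m ≠ some w := by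
  intro n
  induction n with
  | zero => intro ν hν m w hw; simp [Aseq] at hw
  | succ k ih =>
    intro ν hν m w hw
    by_cases hmem : w ∈ Aseq P k m
    · exact ih ν hν m w hmem
    · obtain ⟨hp, hh⟩ := reject_step P hw hmem
      intro hcontra
      have hνw : ν.womenMatch w = some m := (ν.consistent m w).mp hcontra
      have hlt1 : (P.womenPref w).lt (some m) (ht P k w) :=
        hlt_of_le_of_ne _ (le_ht P hp) (fun he => hh he.symm)
      cases hhk : ht P k w with
      | none =>
        rw [hhk] at hlt1
        have := hν.1.2 w
        rw [hνw] at this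
        exact hlt_irrefl _ (hlt_of_lt_of_le _ hlt1 this)
      | some m' =>
        rw [hhk] at hlt1
        have hpm' : pt P k m' = some w := ht_prp P hhk
        have hne : ν.menMatch m' ≠ some w := by
          intro he
          have := (ν.consistent m' w).mp he
          rw [hνw] at this
          exact hne_of_lt _ hlt1 this
        have hmemc : ν.menMatch m' ∈ cands (Aseq P k) m' := by
          cases hνm' : ν.menMatch m' with
          | none => exact none_mem_cands
          | some w'' => exact mem_cands.mpr (fun hw'' => ih ν hν m' w'' hw'' hνm')
        have hle1 : (P.menPref m').le (ν.menMatch m') (pt P k m') := le_prp P hmemc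
        have hlt2 : (P.menPref m').lt (ν.menMatch m') (some w) :=
          hlt_of_le_of_ne _ (hpm' ▸ hle1) hne
        exact hν.2 m' w ⟨hlt2, hνw ▸ hlt1⟩

noncomputable def asize (A : M → Finset W) : ℕ := ∑ m, (A m).card

theorem asize_lt {A : M → Finset W} (h : step P A ≠ A) : asize A < asize (step P A) := by
  have hne : ∃ m, step P A m ≠ A m := by
    by_contra hc
    push_neg at hc
    exact h (funext hc)
  obtain ⟨m, hm⟩ := hne
  refine Finset.sum_lt_sum (fun i _ => Finset.card_le_card (subset_step P)) ?_
  refine ⟨m, Finset.mem_univ m, Finset.card_lt_card ⟨subset_step P, fun hsub => ?_⟩⟩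
  exact hm (Finset.Subset.antisymm hsub (subset_step P))

theorem exists_fix : ∃ N, step P (Aseq P N) = Aseq P N := by
  by_contra hc
  push_neg at hc
  have key : ∀ n, n ≤ asize (Aseq P n) := by
    intro n
    induction n with
    | zero => exact Nat.zero_le _
    | succ k ih =>
      have := asize_lt P (hc k)
      rw [← Aseq_succ] at this
      omega
  have hbound : ∀ n, asize (Aseq P n) ≤ Fintype.card M * Fintype.card W := by
    intro n
    calc asize (Aseq P n) ≤ ∑ _m : M, Fintype.card W :=
          Finset.sum_le_sum (fun i _ => Finset.card_le_card (Finset.subset_univ _))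
      _ = Fintype.card M * Fintype.card W := by
          rw [Finset.sum_const, Finset.card_univ, smul_eq_mul]
  have := key (Fintype.card M * Fintype.card W + 1)
  have := hbound (Fintype.card M * Fintype.card W + 1)
  omega

noncomputable def matchingOf (N : ℕ) (hfix : step P (Aseq P N) = Aseq P N) : Matching M W where
  menMatch m := pt P N m
  womenMatch w := ht P N w
  consistent := by
    intro m w
    constructor
    · intro hp
      by_contra hh
      have hw : w ∈ step P (Aseq P N) m := (mem_step P).mpr (Or.inr ⟨hp, hh⟩)
      rw [congrFun hfix m] at hw
      exact not_mem_of_pt P hp hw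
    · exact ht_prp P

theorem matchingOf_stable (N : ℕ) (hfix : step P (Aseq P N) = Aseq P N) :
    Stable (matchingOf P N hfix) P := by
  refine ⟨⟨fun m => le_prp P none_mem_cands, fun w => none_le_hold P⟩, ?_⟩
  rintro m w ⟨h1, h2⟩
  have hw : w ∈ Aseq P N m := by
    by_contra hw'
    exact hnot_lt_of_le _ (le_prp P (mem_cands.mpr hw')) h1
  exact hnot_lt_of_le _ (hle_of_lt _ (inv1 P N m w hw)) h2

theorem matchingOf_opt (N : ℕ) (hfix : step P (Aseq P N) = Aseq P N) :
    MenOptimalStable (matchingOf P N hfix) P := by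
  refine ⟨matchingOf_stable P N hfix, ?_⟩
  intro ν hν m
  have hmemc : ν.menMatch m ∈ cands (Aseq P N) m := by
    cases hνm : ν.menMatch m with
    | none => exact none_mem_cands
    | some w'' => exact mem_cands.mpr (fun hw'' => inv2 P N ν hν m w'' hw'' hνm)
  exact le_prp P hmemc

theorem exists_menopt : ∃ μ : Matching M W, MenOptimalStable μ P :=
  (exists_fix P).elim (fun N hfix => ⟨matchingOf P N hfix, matchingOf_opt P N hfix⟩)

theorem menopt_unique_men {μ μ' : Matching M W} (h : MenOptimalStable μ P)
    (h' : MenOptimalStable μ' P) (m : M) : μ.menMatch m = μ'.menMatch m :=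
  hle_antisymm _ (h'.2 μ h.1 m) (h.2 μ' h'.1 m)

theorem menopt_unique_women {μ μ' : Matching M W} (h : MenOptimalStable μ P)
    (h' : MenOptimalStable μ' P) (w : W) : μ.womenMatch w = μ'.womenMatch w := by
  cases hw : μ.womenMatch w with
  | none =>
    cases hw' : μ'.womenMatch w with
    | none => rfl
    | some m =>
      have := (μ'.consistent m w).mpr hw'
      rw [← menopt_unique_men P h h' m] at this
      rw [(μ.consistent m w).mp this] at hw
      exact hw.symm
  | some m =>
    have := (μ.consistent m w).mpr hw
    rw [menopt_unique_men P h h' m] at this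
    exact ((μ'.consistent m w).mp this).symm

end DA


theorem no_man_in_coalition [Fintype M] [Fintype W]
    (P Q : Profile M W) (Sm : Set M) (Sw : Set W)
    (μ ν : Matching M W)
    (hμ : MenOptimalStable μ P) (hν : Stable ν Q)
    (hQm : ∀ m ∉ Sm, Q.menPref m = P.menPref m)
    (hQw : ∀ w ∉ Sw, Q.womenPref w = P.womenPref w)
    (hSm0 : ∀ m ∈ Sm, (P.menPref m).lt (μ.menMatch m) (ν.menMatch m))
    (hSw0 : ∀ w ∈ Sw, (P.womenPref w).lt (μ.womenMatch w) (ν.womenMatch w)) :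
    Sm = ∅ := by
  classical
  by_contra hSmne
  obtain ⟨m0, hm0⟩ := Set.nonempty_iff_ne_empty.mpr hSmne
  obtain ⟨N, hfix⟩ := exists_fix P
  set μ' := matchingOf P N hfix with hμ'def
  have hμ'opt := matchingOf_opt P N hfix
  have hmen : ∀ m, μ.menMatch m = μ'.menMatch m := menopt_unique_men P hμ hμ'opt
  have hwom : ∀ w, μ.womenMatch w = μ'.womenMatch w := menopt_unique_women P hμ hμ'opt
  have hSm : ∀ m ∈ Sm, (P.menPref m).lt (μ'.menMatch m) (ν.menMatch m) := by
    intro m hm; rw [← hmen m]; exact hSm0 m hm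
  have hSw : ∀ w ∈ Sw, (P.womenPref w).lt (μ'.womenMatch w) (ν.womenMatch w) := by
    intro w hw; rw [← hwom w]; exact hSw0 w hw
  set M' : M → Prop := fun m => (P.menPref m).lt (μ'.menMatch m) (ν.menMatch m) with hM'def
  have SmsubM' : ∀ m ∈ Sm, M' m := hSm
  -- ν is individually rational under P
  have hνIRP : IndividuallyRational ν P := by
    constructor
    · intro m
      by_cases hm : m ∈ Sm
      · exact hle_trans _ (hμ'opt.1.1.1 m) (hle_of_lt _ (hSm m hm))
      · rw [← hQm m hm]; exact hν.1.1 m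
    · intro w
      by_cases hw : w ∈ Sw
      · exact hle_trans _ (hμ'opt.1.1.2 w) (hle_of_lt _ (hSw w hw))
      · rw [← hQw w hw]; exact hν.1.2 w
  -- key women property
  have keyW : ∀ (mh : M) (w : W), M' mh → ν.menMatch mh = some w →
      (P.womenPref w).lt (ν.womenMatch w) (μ'.womenMatch w) := by
    intro mh w hmh hνm
    have hνw : ν.womenMatch w = some mh := (ν.consistent mh w).mp hνm
    have h1 : (P.menPref mh).lt (μ'.menMatch mh) (some w) := hνm ▸ hmh
    have h2 : ¬ (P.womenPref w).lt (μ'.womenMatch w) (some mh) :=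
      fun hb => hμ'opt.1.2 mh w ⟨h1, hb⟩
    rw [hνw]
    refine hlt_of_le_of_ne _ (hle_of_not_lt _ h2) (fun he => ?_)
    have := (μ'.consistent mh w).mpr he.symm
    rw [this] at h1
    exact hlt_irrefl _ h1
  have wnotSw : ∀ w : W, (∃ mh, M' mh ∧ ν.menMatch mh = some w) → w ∉ Sw := by
    rintro w ⟨mh, hmh, hνm⟩ hwSw
    exact hlt_irrefl _ (hlt_of_lt_of_le _ (keyW mh w hmh hνm) (hle_of_lt _ (hSw w hwSw)))
  -- no blocking pair outside the coalition
  have noblockQ : ∀ (m : M) (w : W), m ∉ Sm → w ∉ Sw → ¬ Blocks m w ν P := by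
    rintro m w hm hw ⟨hb1, hb2⟩
    refine hν.2 m w ⟨?_, ?_⟩
    · rw [hQm m hm]; exact hb1
    · rw [hQw w hw]; exact hb2
  -- every man in M' is ν-matched
  have νmatched : ∀ m : M, M' m → ∃ w, ν.menMatch m = some w := by
    intro m hm
    cases hνm : ν.menMatch m with
    | none =>
      rw [hM'def] at hm
      rw [hνm] at hm
      exact absurd hm (hnot_lt_of_le _ (hμ'opt.1.1.1 m))
    | some w => exact ⟨w, rfl⟩
  by_cases hcase : ∀ w : W, (∃ mh, M' mh ∧ ν.menMatch mh = some w) →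
      ∃ m', M' m' ∧ μ'.menMatch m' = some w
  · -- Case (ii): algorithmic case
    -- counting
    set M'f : Finset M := Finset.univ.filter (fun m => M' m) with hM'f
    have hM'ne : M'f.Nonempty := ⟨m0, Finset.mem_filter.mpr ⟨Finset.mem_univ _, SmsubM' m0 hm0⟩⟩
    set Wν : Finset W := Finset.univ.filter
      (fun w => ∃ mh, M' mh ∧ ν.menMatch mh = some w) with hWν
    set Wμ : Finset W := Finset.univ.filter
      (fun w => ∃ m', M' m' ∧ μ'.menMatch m' = some w) with hWμ
    have hsub : Wν ⊆ Wμ := by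
      intro w hw
      exact Finset.mem_filter.mpr ⟨Finset.mem_univ _,
        hcase w (Finset.mem_filter.mp hw).2⟩
    obtain ⟨w00, hw00⟩ := νmatched m0 (SmsubM' m0 hm0)
    set g : M → W := fun m => if h : ∃ w, ν.menMatch m = some w then h.choose else w00 with hg
    have hgspec : ∀ m, M' m → ν.menMatch m = some (g m) := by
      intro m hm
      rw [hg]; simp only
      rw [dif_pos (νmatched m hm)]
      exact (νmatched m hm).choose_spec
    set f : W → M := fun w =>
      if h : ∃ m', M' m' ∧ μ'.menMatch m' = some w then h.choose else m0 with hf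
    have hfspec : ∀ w ∈ Wμ, M' (f w) ∧ μ'.menMatch (f w) = some w := by
      intro w hw
      have hp := (Finset.mem_filter.mp hw).2
      rw [hf]; simp only
      rw [dif_pos hp]
      exact hp.choose_spec
    have hc1 : M'f.card ≤ Wν.card := by
      refine Finset.card_le_card_of_injOn g (fun m hm => ?_) ?_
      · have hm' := (Finset.mem_filter.mp hm).2
        exact Finset.mem_filter.mpr ⟨Finset.mem_univ _, ⟨m, hm', hgspec m hm'⟩⟩
      · intro m1 hm1 m2 hm2 he
        have h1 := hgspec m1 (Finset.mem_filter.mp hm1).2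
        have h2 := hgspec m2 (Finset.mem_filter.mp hm2).2
        rw [he] at h1
        exact Option.some_inj.mp (((ν.consistent m1 (g m2)).mp h1).symm.trans
          ((ν.consistent m2 (g m2)).mp h2))
    have hfinj : Set.InjOn f Wμ := by
      intro w1 hw1 w2 hw2 he
      have h1 := (hfspec w1 hw1).2
      have h2 := (hfspec w2 hw2).2
      rw [he] at h1
      exact Option.some_inj.mp (h1.symm.trans h2)
    have hfmem : ∀ w ∈ Wμ, f w ∈ M'f := by
      intro w hw
      exact Finset.mem_filter.mpr ⟨Finset.mem_univ _, (hfspec w hw).1⟩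
    have hc3 : Wμ.card ≤ M'f.card := Finset.card_le_card_of_injOn f hfmem hfinj
    have hcards : Wμ.card = M'f.card := le_antisymm hc3
      (le_trans hc1 (Finset.card_le_card hsub))
    have himg : Wμ.image f = M'f := by
      refine Finset.eq_of_subset_of_card_le ?_ ?_
      · intro m hm
        obtain ⟨w, hw, rfl⟩ := Finset.mem_image.mp hm
        exact hfmem w hw
      · rw [Finset.card_image_of_injOn hfinj, hcards]
    have C1 : ∀ m : M, M' m → ∃ w, μ'.menMatch m = some w := by
      intro m hm
      have hmem : m ∈ M'f := Finset.mem_filter.mpr ⟨Finset.mem_univ _, hm⟩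
      rw [← himg] at hmem
      obtain ⟨w, hw, rfl⟩ := Finset.mem_image.mp hmem
      exact ⟨w, (hfspec w hw).2⟩
    have hWeq : Wν = Wμ := Finset.eq_of_subset_of_card_le hsub
      (le_trans (le_of_eq hcards) hc1)
    have C2 : ∀ w : W, (∃ m', M' m' ∧ μ'.menMatch m' = some w) →
        ∃ mh, M' mh ∧ ν.menMatch mh = some w := by
      intro w hw
      have : w ∈ Wμ := Finset.mem_filter.mpr ⟨Finset.mem_univ _, hw⟩
      rw [← hWeq] at this
      exact (Finset.mem_filter.mp this).2
    -- times of first proposal to the final partner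
    have hex : ∀ m : M, ∃ n, pt P n m = pt P N m := fun m => ⟨N, rfl⟩
    set F : M → ℕ := fun m => Nat.find (hex m) with hF
    have Fspec : ∀ m, pt P (F m) m = pt P N m := fun m => Nat.find_spec (hex m)
    have Fle : ∀ m, F m ≤ N := fun m => Nat.find_min' (hex m) rfl
    have Fmin : ∀ m n, n < F m → pt P n m ≠ pt P N m := fun m n hn => Nat.find_min (hex m) hn
    have hptN : ∀ m, μ'.menMatch m = pt P N m := fun _ => rfl
    obtain ⟨mstar, hmstarf, hmax⟩ := Finset.exists_max_image M'f F hM'ne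
    have hmstarM : M' mstar := (Finset.mem_filter.mp hmstarf).2
    set τ := F mstar with hτ
    obtain ⟨wstar, hμmstar⟩ := C1 mstar hmstarM
    obtain ⟨mh, hmhM', hνmh⟩ := C2 wstar ⟨mstar, hmstarM, hμmstar⟩
    have hνwstar : ν.womenMatch wstar = some mh := (ν.consistent mh wstar).mp hνmh
    -- mh was rejected by wstar
    have hmhlt : (P.menPref mh).lt (μ'.menMatch mh) (some wstar) := hνmh ▸ hmhM'
    have hwA : wstar ∈ Aseq P N mh := by
      by_contra hc
      have hle : (P.menPref mh).le (some wstar) (pt P N mh) := le_prp P (mem_cands.mpr hc)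
      rw [← hptN mh] at hle
      exact hnot_lt_of_le _ hle hmhlt
    have hexr : ∃ n, wstar ∈ Aseq P n mh := ⟨N, hwA⟩
    set r := Nat.find hexr with hrdef
    have hrmem : wstar ∈ Aseq P r mh := Nat.find_spec hexr
    have hrmin : ∀ n, n < r → wstar ∉ Aseq P n mh := fun n hn => Nat.find_min hexr hn
    have hrpos : 1 ≤ r := by
      rcases Nat.eq_zero_or_pos r with h0 | h1
      · rw [h0] at hrmem; simp [Aseq] at hrmem
      · exact h1
    have hrsucc : r - 1 + 1 = r := by omega
    obtain ⟨hpmh, hhne⟩ := reject_step P (by rw [hrsucc]; exact hrmem)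
      (hrmin (r - 1) (by omega))
    have hltr1 : (P.womenPref wstar).lt (some mh) (ht P (r-1) wstar) :=
      hlt_of_le_of_ne _ (le_ht P hpmh) (fun he => hhne he.symm)
    -- r - 1 < F mh ≤ τ
    obtain ⟨wh2, hμmh⟩ := C1 mh hmhM'
    have hFmh : pt P (F mh) mh = some wh2 := by rw [Fspec mh, ← hptN mh]; exact hμmh
    have hltwh2 : (P.menPref mh).lt (some wh2) (some wstar) := by
      rw [← hμmh]; exact hmhlt
    have hr1lt : r - 1 < F mh := by
      by_contra hge
      push_neg at hge
      have hle := pt_anti P hge mh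
      rw [hpmh, hFmh] at hle
      exact hnot_lt_of_le _ hle hltwh2
    have hFmhle : F mh ≤ τ := hmax mh (Finset.mem_filter.mpr ⟨Finset.mem_univ _, hmhM'⟩)
    have hτpos : 1 ≤ τ := by omega
    have hr1le : r - 1 ≤ τ - 1 := by omega
    have hτleN : τ ≤ N := Fle mstar
    have hylt : (P.womenPref wstar).lt (some mh) (ht P (τ-1) wstar) :=
      hlt_of_lt_of_le _ hltr1 (ht_mono P hr1le wstar)
    cases hy : ht P (τ-1) wstar with
    | none =>
      rw [hy] at hylt
      have := hνIRP.2 wstar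
      rw [hνwstar] at this
      exact hlt_irrefl _ (hlt_of_le_of_lt _ this hylt)
    | some my =>
      rw [hy] at hylt
      have hmyne : my ≠ mstar := by
        intro he
        subst he
        have hpw : pt P (τ-1) my = some wstar := ht_prp P hy
        refine Fmin my (τ-1) (by omega) ?_
        rw [hpw, ← hptN my, hμmstar]
      have hptmy : pt P (τ-1) my = some wstar := ht_prp P hy
      have hptτmy : pt P τ my = some wstar := by
        have hp := persist P hy
        rw [show τ - 1 + 1 = τ from by omega] at hp
        rw [hp, hptmy]
      have hmyM' : ¬ M' my := by
        intro hmyM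
        obtain ⟨wy, hμmy⟩ := C1 my hmyM
        have hFy : F my ≤ τ := hmax my (Finset.mem_filter.mpr ⟨Finset.mem_univ _, hmyM⟩)
        have hsand : pt P τ my = pt P (F my) my := pt_sandwich P hFy hτleN (Fspec my)
        rw [hptτmy, Fspec my, ← hptN my, hμmy] at hsand
        have hwy : wy = wstar := (Option.some_inj.mp hsand).symm
        subst hwy
        have h1 := (μ'.consistent my wy).mp hμmy
        have h2 := (μ'.consistent mstar wy).mp hμmstar
        rw [h1] at h2
        exact hmyne (Option.some_inj.mp h2)
      have hb2 : (P.womenPref wstar).lt (ν.womenMatch wstar) (some my) := by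
        rw [hνwstar]; exact hylt
      have hb1 : (P.menPref my).lt (ν.menMatch my) (some wstar) := by
        have h1 : (P.menPref my).le (ν.menMatch my) (μ'.menMatch my) :=
          hle_of_not_lt _ hmyM'
        have h2 : (P.menPref my).le (μ'.menMatch my) (some wstar) := by
          have := pt_anti P (show τ-1 ≤ N by omega) my
          rw [hptmy] at this
          rw [hptN my]
          exact this
        refine hlt_of_le_of_ne _ (hle_trans _ h1 h2) (fun he => ?_)
        have hc := (ν.consistent my wstar).mp he
        rw [hνwstar] at hc
        cases Option.some_inj.mp hc
        exact hne_of_lt _ hylt rfl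
      exact noblockQ my wstar (fun hc => hmyM' (SmsubM' my hc))
        (wnotSw wstar ⟨mh, hmhM', hνmh⟩) ⟨hb1, hb2⟩
  · -- Case (i)
    push_neg at hcase
    obtain ⟨w, ⟨mh, hmhM', hνmh⟩, hnone⟩ := hcase
    have hltw := keyW mh w hmhM' hνmh
    have hνw : ν.womenMatch w = some mh := (ν.consistent mh w).mp hνmh
    cases hμw : μ'.womenMatch w with
    | none =>
      rw [hμw] at hltw
      have := hνIRP.2 w
      exact hlt_irrefl _ (hlt_of_le_of_lt _ this hltw)
    | some m =>
      have hμm : μ'.menMatch m = some w := (μ'.consistent m w).mpr hμw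
      have hmM' : ¬ M' m := fun hc => hnone m hc hμm
      have hb2 : (P.womenPref w).lt (ν.womenMatch w) (some m) := by
        rw [← hμw]; exact hltw
      have hb1 : (P.menPref m).lt (ν.menMatch m) (some w) := by
        have h1 : (P.menPref m).le (ν.menMatch m) (μ'.menMatch m) :=
          hle_of_not_lt _ hmM'
        rw [hμm] at h1
        refine hlt_of_le_of_ne _ h1 (fun he => ?_)
        have hc := (ν.consistent m w).mp he
        rw [hνw] at hc
        cases Option.some_inj.mp hc
        exact hmM' hmhM'
      exact noblockQ m w (fun hc => hmM' (SmsubM' m hc))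
        (wnotSw w ⟨mh, hmhM', hνmh⟩) ⟨hb1, hb2⟩

end MpdaAux

theorem mpda_spec [Fintype M] [Fintype W] (P : Profile M W) :
    MenOptimalStable (mpda P) P := by
  unfold mpda
  split
  next h => exact h.choose_spec
  next h => exact absurd (MpdaAux.exists_menopt P) h

/-- a coalition manipulating the MPDA rule consists only of women. -/
theorem manipulating_coalition_only_women [Fintype M] [Fintype W]
    (P Q : Profile M W) (Sm : Set M) (Sw : Set W)
    (h : MpdaManipulates P Q Sm Sw) : Sm = ∅ := by
  obtain ⟨hQm, hQw, hSm, hSw⟩ := h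
  exact MpdaAux.no_man_in_coalition P Q Sm Sw (mpda P) (mpda Q)
    (mpda_spec P) (mpda_spec Q).1 hQm hQw hSm hSw
end

section
/- No coalition of men can manipulate the men-proposing deferred acceptance rule: there is no preference profile P, nonempty set of men M' ⊆ M, and joint misreport P̃_{M'} such that every man in M' is strictly better off under D^M(P̃_{M'}, P_{-M'}) than under D^M(P) according to his true preferences (Dubins–Freedman theorem). -/
variable {M W : Type*}

/-!
Let `μ = D^M(P)` and let `ν = D^M(Q)` be the outcome of the misreport. Men outside the coalition
and all women report truthfully, so `ν`, being stable for `Q`, is individually rational for `P`.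
By the blocking lemma of Gale and Sotomayor, whenever some men strictly prefer an individually
rational matching `ν` to the men-optimal stable matching, a pair `(m, w)` with `m` not among them
blocks `ν`. Both report truthfully, so they block `ν` at `Q` as well: a contradiction.

The blocking lemma is proved by running deferred acceptance, which also shows that `D^M` is the
men-optimal stable matching. If the new partner `w` of some gaining man is not the DA partner of a
gaining man, then `w` and her DA partner block `ν`. Otherwise the gaining men are matched by `ν`
to exactly their DA partners. Take the gaining man who is the last to settle on his DA partner
`w`: the man `w` held just before is rejected at that point, so he does not gain, and `w`, who
rejected her `ν`-partner earlier, blocks `ν` with him.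
-/

theorem exists_eq_some_of_none_le_of_lt {α : Type*} {o : LinearOrder (Option α)}
    {x y : Option α} (h₀ : o.le none x) (h : o.lt x y) : ∃ a, y = some a := by
  cases y with
  | none => exact absurd h h₀.not_gt
  | some a => exact ⟨a, rfl⟩

theorem IndividuallyRational.exists_eq_some_of_lt {P : Profile M W} {μ : Matching M W}
    (hμ : IndividuallyRational μ P) {m : M} {x : Option W}
    (h : (P.menPref m).lt (μ.menMatch m) x) : ∃ w, x = some w :=
  exists_eq_some_of_none_le_of_lt (hμ.1 m) h

theorem Matching.ext_menMatch {μ ν : Matching M W} (h : μ.menMatch = ν.menMatch) : μ = ν := by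
  obtain ⟨f, g, hμ⟩ := μ
  obtain ⟨f', g', hν⟩ := ν
  obtain rfl : f = f' := h
  obtain rfl : g = g' := funext fun w => Option.ext fun m => (hμ m w).symm.trans (hν m w)
  rfl

theorem Matching.eq_of_menMatch_eq_some_s5 (μ : Matching M W) {m m' : M} {w : W}
    (h : μ.menMatch m = some w) (h' : μ.menMatch m' = some w) : m = m' :=
  Option.some_injective _ (((μ.consistent m w).mp h).symm.trans ((μ.consistent m' w).mp h'))

theorem MenOptimalStable.unique {P : Profile M W} {μ ν : Matching M W}
    (hμ : MenOptimalStable μ P) (hν : MenOptimalStable ν P) : μ = ν :=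
  Matching.ext_menMatch <| funext fun m =>
    -- preferences are not instances: this makes `m`'s order the ambient one on `Option W`
    let _ := P.menPref m
    le_antisymm (hν.2 μ hμ.1 m) (hμ.2 ν hν.1 m)

/-- By stability of `μ`, `w` prefers her `μ`-partner to `m'`. -/
theorem Stable.exists_blocks_of_lt {P : Profile M W} {μ μ' : Matching M W} (hμ : Stable μ P)
    (hIR : IndividuallyRational μ' P) {m' : M} {w : W} (hm' : μ'.menMatch m' = some w)
    (hlt : (P.menPref m').lt (μ.menMatch m') (some w))
    (hw : ∀ m, μ.menMatch m = some w → (P.menPref m).le (μ'.menMatch m) (μ.menMatch m)) :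
    ∃ m, μ.menMatch m = some w ∧ Blocks m w μ' P := by
  let _ := P.menPref m'
  let _ := P.womenPref w
  have hw' : μ'.womenMatch w = some m' := (μ'.consistent m' w).mp hm'
  have hne : μ.womenMatch w ≠ some m' := fun h => hlt.ne ((μ.consistent m' w).mpr h)
  have hgt : (P.womenPref w).lt (some m') (μ.womenMatch w) :=
    (not_lt.mp fun h => hμ.2 m' w ⟨hlt, h⟩).lt_of_ne' hne
  obtain ⟨m, hm⟩ := exists_eq_some_of_none_le_of_lt (hw' ▸ hIR.2 w) hgt
  have hμm : μ.menMatch m = some w := (μ.consistent m w).mpr hm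
  refine ⟨m, hμm, ?_, hw' ▸ hm ▸ hgt⟩
  let _ := P.menPref m
  refine (hμm ▸ hw m hμm).lt_of_ne fun h => ?_
  exact hne (hm.trans (congrArg some (μ'.eq_of_menMatch_eq_some_s5 h hm')))

namespace DeferredAcceptance

variable [Fintype W] [DecidableEq W] {P : Profile M W}

/-- The options still open to `m` when `R m` is the set of women who have rejected him. -/
def available (R : M → Finset W) (m : M) : Finset (Option W) :=
  Finset.univ.filter fun x => ∀ w, x = some w → w ∉ R m

variable (P) in
def proposal (R : M → Finset W) (m : M) : Option W :=
  let _ := P.menPref m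
  (available R m).max' ⟨none, by simp [available]⟩

theorem le_proposal {R : M → Finset W} {m : M} {x : Option W} (h : ∀ w, x = some w → w ∉ R m) :
    (P.menPref m).le x (proposal P R m) :=
  let _ := P.menPref m
  Finset.le_max' _ x (by simpa [available] using h)

theorem none_le_proposal (R : M → Finset W) (m : M) : (P.menPref m).le none (proposal P R m) :=
  le_proposal (by simp)

theorem proposal_not_mem {R : M → Finset W} {m : M} {w : W} (h : proposal P R m = some w) :
    w ∉ R m := by
  let _ := P.menPref m
  have := Finset.max'_mem (available R m) ⟨none, by simp [available]⟩
  simp only [available, Finset.mem_filter, Finset.mem_univ, true_and] at this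
  exact this w h

theorem mem_of_proposal_lt {R : M → Finset W} {m : M} {w : W}
    (h : (P.menPref m).lt (proposal P R m) (some w)) : w ∈ R m := by
  let _ := P.menPref m
  by_contra hw
  exact h.not_ge (le_proposal fun w' hw' => Option.some_injective _ hw' ▸ hw)

theorem proposal_antitone {R R' : M → Finset W} {m : M} (h : R m ⊆ R' m) :
    (P.menPref m).le (proposal P R' m) (proposal P R m) :=
  le_proposal fun _ hw hmem => proposal_not_mem hw (h hmem)

theorem proposal_congr {R R' : M → Finset W} {m : M} (h : R m = R' m) :
    proposal P R m = proposal P R' m := by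
  simp only [proposal, available, h]

variable [Fintype M] [DecidableEq M]

variable (P) in
def suitors (R : M → Finset W) (w : W) : Finset (Option M) :=
  Finset.univ.filter fun x => ∀ m, x = some m → proposal P R m = some w

variable (P) in
def held (R : M → Finset W) (w : W) : Option M :=
  let _ := P.womenPref w
  (suitors P R w).max' ⟨none, by simp [suitors]⟩

theorem le_held {R : M → Finset W} {m : M} {w : W} (h : proposal P R m = some w) :
    (P.womenPref w).le (some m) (held P R w) :=
  let _ := P.womenPref w
  Finset.le_max' _ _ (by simpa [suitors] using h)

theorem none_le_held (R : M → Finset W) (w : W) : (P.womenPref w).le none (held P R w) :=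
  let _ := P.womenPref w
  Finset.le_max' _ _ (by simp [suitors])

theorem proposal_of_held {R : M → Finset W} {m : M} {w : W} (h : held P R w = some m) :
    proposal P R m = some w := by
  let _ := P.womenPref w
  have := Finset.max'_mem (suitors P R w) ⟨none, by simp [suitors]⟩
  simp only [suitors, Finset.mem_filter, Finset.mem_univ, true_and] at this
  exact this m h

variable (P) in
def step (R : M → Finset W) (m : M) : Finset W :=
  R m ∪ Finset.univ.filter fun w => proposal P R m = some w ∧ held P R w ≠ some m

theorem mem_step {R : M → Finset W} {m : M} {w : W} :
    w ∈ step P R m ↔ w ∈ R m ∨ (proposal P R m = some w ∧ held P R w ≠ some m) := by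
  simp [step]

theorem step_eq_of_held {R : M → Finset W} {m : M} {w : W} (h : held P R w = some m) :
    step P R m = R m := by
  refine Finset.union_eq_left.mpr fun w' hw' => ?_
  obtain ⟨hprop, hne⟩ := (Finset.mem_filter.mp hw').2
  obtain rfl : w = w' := Option.some_injective _ ((proposal_of_held h).symm.trans hprop)
  exact absurd h hne

theorem held_le_held_step (R : M → Finset W) (w : W) :
    (P.womenPref w).le (held P R w) (held P (step P R) w) := by
  rcases hw : held P R w with _ | m
  · exact none_le_held _ w
  · have hstep : step P R m = R m := step_eq_of_held hw
    exact le_held ((proposal_congr hstep).trans (proposal_of_held hw))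

variable (P) in
def rejections : ℕ → M → Finset W
  | 0 => fun _ => ∅
  | n + 1 => step P (rejections n)

theorem monotone_rejections : Monotone (rejections P) :=
  monotone_nat_of_le_succ fun _ _ => Finset.subset_union_left

theorem lt_held_of_mem_rejections_succ {n : ℕ} {m : M} {w : W}
    (h : w ∈ rejections P (n + 1) m) :
    (P.womenPref w).lt (some m) (held P (rejections P n) w) := by
  let _ := P.womenPref w
  rcases mem_step.mp h with hold | ⟨hprop, hne⟩
  · cases n with
    | zero => simp [rejections] at hold
    | succ n => exact (lt_held_of_mem_rejections_succ hold).trans_le (held_le_held_step _ w)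
  · exact (le_held hprop).lt_of_ne' hne

/-- Rejection sets only grow, and there are finitely many of them. -/
theorem exists_rejections_eq_of_le (P : Profile M W) :
    ∃ N, ∀ n, N ≤ n → rejections P n = rejections P N := by
  obtain ⟨N, hN⟩ := WellFoundedGT.monotone_chain_condition ⟨rejections P, monotone_rejections⟩
  exact ⟨N, fun n hn => (hN n hn).symm⟩

variable (P) in
noncomputable def finalRound : ℕ := (exists_rejections_eq_of_le P).choose

theorem rejections_eq_of_finalRound_le {n : ℕ} (h : finalRound P ≤ n) :
    rejections P n = rejections P (finalRound P) :=
  (exists_rejections_eq_of_le P).choose_spec n h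

theorem rejections_le_rejections_finalRound (n : ℕ) :
    rejections P n ≤ rejections P (finalRound P) :=
  (monotone_rejections (le_max_left n _)).trans
    (rejections_eq_of_finalRound_le (le_max_right _ _)).le

theorem step_rejections_finalRound :
    step P (rejections P (finalRound P)) = rejections P (finalRound P) :=
  rejections_eq_of_finalRound_le (Nat.le_succ _)

variable (P) in
noncomputable def outcome : Matching M W where
  menMatch := proposal P (rejections P (finalRound P))
  womenMatch := held P (rejections P (finalRound P))
  consistent m w := by
    refine ⟨fun h => ?_, proposal_of_held⟩
    by_contra hne
    have hmem : w ∈ step P (rejections P (finalRound P)) m := mem_step.mpr (Or.inr ⟨h, hne⟩)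
    rw [step_rejections_finalRound] at hmem
    exact proposal_not_mem h hmem

theorem outcome_stable : Stable (outcome P) P := by
  refine ⟨⟨fun m => none_le_proposal _ m, fun w => none_le_held _ w⟩, fun m w ⟨hm, hw⟩ => ?_⟩
  let _ := P.womenPref w
  have hrej : w ∈ rejections P (finalRound P + 1) m := by
    rw [rejections_eq_of_finalRound_le (Nat.le_succ _)]
    exact mem_of_proposal_lt hm
  exact (lt_held_of_mem_rejections_succ hrej).asymm hw

theorem not_mem_rejections_of_stable {ν : Matching M W} (hν : Stable ν P) {m : M} {w : W}
    (hνm : ν.menMatch m = some w) (n : ℕ) : w ∉ rejections P n m := by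
  induction n generalizing m w with
  | zero => simp [rejections]
  | succ n ih =>
    intro hrej
    rcases mem_step.mp hrej with hold | ⟨hprop, hne⟩
    · exact ih hνm hold
    let _ := P.womenPref w
    have hνw : ν.womenMatch w = some m := (ν.consistent m w).mp hνm
    have hgt : (P.womenPref w).lt (some m) (held P (rejections P n) w) :=
      (le_held hprop).lt_of_ne' hne
    obtain ⟨m', hm'⟩ := exists_eq_some_of_none_le_of_lt (hνw ▸ hν.1.2 w) hgt
    have hm'm : m' ≠ m := fun h => hne (h ▸ hm')
    let _ := P.menPref m'
    have hle : (P.menPref m').le (ν.menMatch m') (some w) :=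
      proposal_of_held hm' ▸ le_proposal fun w' hw' => ih hw'
    have hne' : ν.menMatch m' ≠ some w := fun h => hm'm (ν.eq_of_menMatch_eq_some_s5 h hνm)
    exact hν.2 m' w ⟨hle.lt_of_ne hne', hνw ▸ hm' ▸ hgt⟩

theorem outcome_menOptimalStable : MenOptimalStable (outcome P) P :=
  ⟨outcome_stable, fun _ hν _ => le_proposal fun _ hw => not_mem_rejections_of_stable hν hw _⟩

theorem mpda_eq_outcome (P : Profile M W) : mpda P = outcome P := by
  have h : ∃ μ, MenOptimalStable μ P := ⟨_, outcome_menOptimalStable⟩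
  unfold mpda
  rw [dif_pos h]
  exact h.choose_spec.unique outcome_menOptimalStable

theorem outcome_le_proposal (n : ℕ) (m : M) :
    (P.menPref m).le ((outcome P).menMatch m) (proposal P (rejections P n) m) :=
  proposal_antitone (rejections_le_rejections_finalRound n m)

variable (P) in
noncomputable def settleRound (m : M) : ℕ :=
  Nat.find (⟨finalRound P, rfl⟩ : ∃ n, proposal P (rejections P n) m = (outcome P).menMatch m)

theorem proposal_eq_outcome_of_settleRound_le {m : M} {n : ℕ} (h : settleRound P m ≤ n) :
    proposal P (rejections P n) m = (outcome P).menMatch m := by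
  let _ := P.menPref m
  refine le_antisymm ?_ (outcome_le_proposal n m)
  calc proposal P (rejections P n) m
      ≤ proposal P (rejections P (settleRound P m)) m :=
        proposal_antitone (monotone_rejections h m)
    _ = (outcome P).menMatch m := Nat.find_spec (⟨finalRound P, rfl⟩ :
        ∃ n, proposal P (rejections P n) m = (outcome P).menMatch m)

theorem proposal_ne_outcome_of_lt_settleRound {m : M} {n : ℕ} (h : n < settleRound P m) :
    proposal P (rejections P n) m ≠ (outcome P).menMatch m :=
  Nat.find_min _ h

theorem mem_rejections_settleRound {m : M} {w : W}
    (h : (P.menPref m).lt ((outcome P).menMatch m) (some w)) :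
    w ∈ rejections P (settleRound P m) m := by
  rw [← proposal_eq_outcome_of_settleRound_le le_rfl] at h
  exact mem_of_proposal_lt h

theorem exists_held_before_settleRound {m₁ m' : M} {w : W}
    (hm₁ : (outcome P).menMatch m₁ = some w) (hrej : w ∈ rejections P (settleRound P m₁) m')
    (hm' : (P.womenPref w).le none (some m')) :
    ∃ m₂, m₂ ≠ m₁ ∧ proposal P (rejections P (settleRound P m₁)) m₂ = some w ∧
      (P.womenPref w).lt (some m') (some m₂) := by
  obtain ⟨n, hn⟩ : ∃ n, settleRound P m₁ = n + 1 :=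
    Nat.exists_eq_add_one_of_ne_zero fun h => by simp [h, rejections] at hrej
  rw [hn] at hrej ⊢
  have hlt := lt_held_of_mem_rejections_succ hrej
  obtain ⟨m₂, hm₂⟩ := exists_eq_some_of_none_le_of_lt hm' hlt
  have hprop : proposal P (rejections P n) m₂ = some w := proposal_of_held hm₂
  refine ⟨m₂, ?_, ?_, hm₂ ▸ hlt⟩
  · rintro rfl
    exact proposal_ne_outcome_of_lt_settleRound (hn ▸ n.lt_succ_self) (hprop.trans hm₁.symm)
  · rw [rejections, proposal_congr (step_eq_of_held hm₂)]
    exact hprop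

theorem exists_blocks_of_image_subset {μ' : Matching M W} (hIR : IndividuallyRational μ' P)
    {S : Finset M} (hS : ∀ m, m ∈ S ↔ (P.menPref m).lt ((outcome P).menMatch m) (μ'.menMatch m))
    (hSne : S.Nonempty) (himage : S.image (outcome P).menMatch ⊆ S.image μ'.menMatch) :
    ∃ m w, ¬ (P.menPref m).lt ((outcome P).menMatch m) (μ'.menMatch m) ∧ Blocks m w μ' P := by
  set μ := outcome P
  obtain ⟨m₁, hm₁, hlast⟩ := S.exists_max_image (settleRound P) hSne
  obtain ⟨m', hm', hm'm₁⟩ := Finset.mem_image.mp (himage (Finset.mem_image_of_mem _ hm₁))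
  have hgain := (hS m').mp hm'
  obtain ⟨w, hw⟩ := outcome_stable.1.exists_eq_some_of_lt hgain
  rw [hw] at hm'm₁ hgain
  have hrej : w ∈ rejections P (settleRound P m₁) m' :=
    monotone_rejections (hlast m' hm') m' (mem_rejections_settleRound hgain)
  have hw' : μ'.womenMatch w = some m' := (μ'.consistent m' w).mp hw
  obtain ⟨m₂, hne, hprop, hlt⟩ :=
    exists_held_before_settleRound hm'm₁.symm hrej (hw' ▸ hIR.2 w)
  have hμm₂ : μ.menMatch m₂ ≠ some w := fun h => hne (μ.eq_of_menMatch_eq_some_s5 h hm'm₁.symm)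
  have hstay : ¬ (P.menPref m₂).lt (μ.menMatch m₂) (μ'.menMatch m₂) := fun h =>
    hμm₂ ((proposal_eq_outcome_of_settleRound_le (hlast m₂ ((hS m₂).mpr h))).symm.trans hprop)
  let _ := P.menPref m₂
  refine ⟨m₂, w, hstay, ?_, hw' ▸ hlt⟩
  calc μ'.menMatch m₂ ≤ μ.menMatch m₂ := not_lt.mp hstay
    _ < some w := (hprop ▸ outcome_le_proposal _ m₂).lt_of_ne hμm₂

theorem exists_blocks_of_outcome_lt {μ' : Matching M W} (hIR : IndividuallyRational μ' P)
    (hgain : ∃ m, (P.menPref m).lt ((outcome P).menMatch m) (μ'.menMatch m)) :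
    ∃ m w, ¬ (P.menPref m).lt ((outcome P).menMatch m) (μ'.menMatch m) ∧ Blocks m w μ' P := by
  set μ := outcome P
  let S := Finset.univ.filter fun m => (P.menPref m).lt (μ.menMatch m) (μ'.menMatch m)
  have hS : ∀ m, m ∈ S ↔ (P.menPref m).lt (μ.menMatch m) (μ'.menMatch m) := by simp [S]
  by_cases hsub : S.image μ'.menMatch ⊆ S.image μ.menMatch
  · have hinj : Set.InjOn μ'.menMatch S := fun a ha b _ hab => by
      obtain ⟨w, hw⟩ := outcome_stable.1.exists_eq_some_of_lt ((hS a).mp ha)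
      exact μ'.eq_of_menMatch_eq_some_s5 hw (hab ▸ hw)
    refine exists_blocks_of_image_subset hIR hS ?_ ?_
    · obtain ⟨m, hm⟩ := hgain
      exact ⟨m, (hS m).mpr hm⟩
    · refine (Finset.eq_of_subset_of_card_le hsub ?_).symm.subset
      rw [Finset.card_image_of_injOn hinj]
      exact Finset.card_image_le
  · obtain ⟨_, hx, hnot⟩ := Finset.not_subset.mp hsub
    obtain ⟨m', hm', rfl⟩ := Finset.mem_image.mp hx
    obtain ⟨w, hw⟩ := outcome_stable.1.exists_eq_some_of_lt ((hS m').mp hm')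
    have hstay : ∀ m, μ.menMatch m = some w →
        ¬ (P.menPref m).lt (μ.menMatch m) (μ'.menMatch m) :=
      fun m hm hgain => hnot (hw ▸ hm ▸ Finset.mem_image_of_mem _ ((hS m).mpr hgain))
    obtain ⟨m, hm, hblock⟩ := outcome_stable.exists_blocks_of_lt hIR hw (hw ▸ (hS m').mp hm')
      fun m hm => let _ := P.menPref m; not_lt.mp (hstay m hm)
    exact ⟨m, w, hstay m hm, hblock⟩

end DeferredAcceptance

open DeferredAcceptance

/-- Dubins-Freedman: no nonempty coalition of men can manipulate
the MPDA rule. -/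
theorem no_coalition_of_men_manipulates [Fintype M] [Fintype W] :
    ¬ ∃ (P Q : Profile M W) (Sm : Set M), Sm.Nonempty ∧
        (∀ m ∉ Sm, Q.menPref m = P.menPref m) ∧
        (∀ w : W, Q.womenPref w = P.womenPref w) ∧
        (∀ m ∈ Sm, (P.menPref m).lt ((mpda P).menMatch m) ((mpda Q).menMatch m)) := by
  classical
  rintro ⟨P, Q, Sm, ⟨m₀, hm₀⟩, hmen, hwomen, hgain⟩
  rw [mpda_eq_outcome P] at hgain
  have hQ : Stable (mpda Q) Q := mpda_eq_outcome Q ▸ outcome_stable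
  have hIR : IndividuallyRational (mpda Q) P := by
    refine ⟨fun m => ?_, fun w => hwomen w ▸ hQ.1.2 w⟩
    by_cases hm : m ∈ Sm
    · let _ := P.menPref m
      exact (outcome_stable.1.1 m).trans (hgain m hm).le
    · exact hmen m hm ▸ hQ.1.1 m
  obtain ⟨m, w, hm, hblock⟩ := exists_blocks_of_outcome_lt hIR ⟨m₀, hgain m₀ hm₀⟩
  have hmS : m ∉ Sm := fun h => hm (hgain m h)
  refine hQ.2 m w ?_
  rwa [Blocks, hmen m hmS, hwomen w]
end
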